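/- arXiv:2403.15682 — 11 statements merged into one kernel-verified Lean document; each statement's English description precedes it below -/
import Mathlib

section
/- Let n ≥ 1, let φ : [0,∞) → [0,∞) be an increasing, convex, non-constant function, and let μ be the probability measure on ℝⁿ with density x ↦ e^{-φ(|x|)} with respect to Lebesgue measure. Let K ⊂ ℝⁿ be a convex symmetric body and R > 0, and suppose there exists t₀ > 0 such that μ(tR·B₂ⁿ) ≤ μ(tK) for all t ≥ t₀. Then R·B₂ⁿ ⊆ K. -/
/-!
Suppose `x ∈ R • B₂ⁿ \ K`. Separating `x` from `K` gives an open half-space `U = {f > u}`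
disjoint from `K` that meets the open ball of radius `R`, hence contains an open set `A` inside a
ball of radius `c < R`. For large `t`, `μ(t • U) ≥ e^{-φ(tc)} vol(A)`, whereas convexity makes
`φ` grow at least linearly beyond some point, so that `μ((tR) • B₂ⁿ)ᶜ ≤ e^{-φ(tc)} ε(t)` with
`ε(t) → 0`. But `t • U` misses `t • K`, so the hypothesis forces
`μ(t • U) ≤ μ((tR) • B₂ⁿ)ᶜ`, a contradiction.
-/

open MeasureTheory Filter Set Pointwise Topology Module
open scoped ENNReal

theorem ConvexOn.exists_pos_add_mul_le {φ : ℝ → ℝ} (hmono : MonotoneOn φ (Ici 0))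
    (hconv : ConvexOn ℝ (Ici 0) φ) (hnc : ∃ s t : ℝ, 0 ≤ s ∧ 0 ≤ t ∧ φ s ≠ φ t) :
    ∃ m > 0, ∃ s, ∀ p q, s ≤ p → p ≤ q → φ p + m * (q - p) ≤ φ q := by
  obtain ⟨s₀, s₁, hs₀, hs₀₁, hφ⟩ : ∃ s₀ s₁, 0 ≤ s₀ ∧ s₀ < s₁ ∧ φ s₀ < φ s₁ := by
    obtain ⟨s, t, hs, ht, hst⟩ := hnc
    rcases hst.lt_or_gt with hst | hst
    · exact ⟨s, t, hs, hmono.reflect_lt hs ht hst, hst⟩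
    · exact ⟨t, s, ht, hmono.reflect_lt ht hs hst, hst⟩
  refine ⟨slope φ s₀ s₁, ?_, s₁, fun p q hp hpq => ?_⟩
  · rw [slope_def_field]
    exact div_pos (sub_pos.2 hφ) (sub_pos.2 hs₀₁)
  rcases hpq.eq_or_lt with rfl | hpq
  · simp
  have hp₀ : (0 : ℝ) ≤ p := by linarith
  have hq₀ : (0 : ℝ) ≤ q := by linarith
  have h₁ : slope φ s₀ s₁ ≤ slope φ s₀ p :=
    hconv.slope_mono hs₀ ⟨by simp only [mem_Ici]; linarith, hs₀₁.ne'⟩ ⟨hp₀, by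
      simp only [mem_singleton_iff]; linarith⟩ hp
  have h₂ : slope φ p s₀ ≤ slope φ p q :=
    hconv.slope_mono hp₀ ⟨hs₀, by simp only [mem_singleton_iff]; linarith⟩ ⟨hq₀, hpq.ne'⟩
      (by linarith)
  have h := h₁.trans (slope_comm φ s₀ p ▸ h₂)
  rw [slope_def_field φ p q, le_div_iff₀ (sub_pos.2 hpq)] at h
  linarith

theorem Real.exp_neg_mul_le_mul_one_add_rpow_neg {a s : ℝ} (ha : 0 < a) (hs : 0 ≤ s) (k : ℕ) :
    Real.exp (-(a * s)) ≤ Real.exp a * k.factorial / a ^ k * (1 + s) ^ (-(k : ℝ)) := by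
  have h := Real.pow_div_factorial_le_exp (a * (1 + s)) (by positivity) k
  rw [div_le_iff₀ (by positivity), mul_pow] at h
  rw [Real.rpow_neg (by positivity), Real.rpow_natCast, ← div_eq_mul_inv,
    le_div_iff₀ (by positivity), le_div_iff₀ (by positivity)]
  calc Real.exp (-(a * s)) * (1 + s) ^ k * a ^ k
      = Real.exp a * Real.exp (-(a * (1 + s))) * (a ^ k * (1 + s) ^ k) := by
        rw [← Real.exp_add]; ring_nf
    _ ≤ Real.exp a * Real.exp (-(a * (1 + s))) * (Real.exp (a * (1 + s)) * k.factorial) := by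
        gcongr
    _ = Real.exp a * k.factorial := by
        rw [Real.exp_neg]; field_simp

theorem mul_measure_le_withDensity_apply {α : Type*} [MeasurableSpace α] (μ : Measure α)
    {f : α → ℝ≥0∞} {s : Set α} {c : ℝ≥0∞} (hs : MeasurableSet s) (h : ∀ x ∈ s, c ≤ f x) :
    c * μ s ≤ μ.withDensity f s := by
  rw [withDensity_apply _ hs, ← setLIntegral_const]
  exact setLIntegral_mono' hs h

theorem withDensity_apply_le_mul_withDensity_apply {α : Type*} [MeasurableSpace α]
    (μ : Measure α) {f g : α → ℝ≥0∞} {s : Set α} {c : ℝ≥0∞} (hc : c ≠ ∞) (hs : MeasurableSet s)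
    (h : ∀ x ∈ s, f x ≤ c * g x) :
    μ.withDensity f s ≤ c * μ.withDensity g s := by
  rw [withDensity_apply _ hs, withDensity_apply _ hs, ← lintegral_const_mul' _ _ hc]
  exact setLIntegral_mono' hs h

theorem withDensity_compl_closedBall_le_mul {E : Type*} [NormedAddCommGroup E]
    [MeasurableSpace E] [OpensMeasurableSpace E] (ν : Measure E) {φ : ℝ → ℝ} {m s : ℝ}
    (hm : 0 ≤ m) (hgrowth : ∀ p q, s ≤ p → p ≤ q → φ p + m * (q - p) ≤ φ q) {θ ρ : ℝ} (hθ₀ : 0 ≤ θ)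
    (hθ₁ : θ ≤ 1) (hρ : 0 ≤ ρ) (hs : s ≤ θ * ρ) :
    ν.withDensity (fun x => ENNReal.ofReal (Real.exp (-φ ‖x‖))) (Metric.closedBall 0 ρ)ᶜ ≤
      ENNReal.ofReal (Real.exp (-φ (θ * ρ))) *
        ν.withDensity (fun x => ENNReal.ofReal (Real.exp (-(m * (1 - θ) * ‖x‖))))
          (Metric.closedBall 0 ρ)ᶜ := by
  refine withDensity_apply_le_mul_withDensity_apply ν ENNReal.ofReal_ne_top
    measurableSet_closedBall.compl fun x hx => ?_
  rw [mem_compl_iff, Metric.mem_closedBall, dist_zero_right, not_le] at hx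
  rw [← ENNReal.ofReal_mul (Real.exp_pos _).le, ← Real.exp_add]
  refine ENNReal.ofReal_le_ofReal (Real.exp_le_exp.2 ?_)
  have hθρ : θ * ρ ≤ ‖x‖ := by nlinarith
  have := hgrowth _ _ hs hθρ
  nlinarith [mul_le_mul_of_nonneg_left hx.le (mul_nonneg hm hθ₀)]

section AddHaar

variable {E : Type*} [NormedAddCommGroup E] [NormedSpace ℝ E] [FiniteDimensional ℝ E]
  [MeasurableSpace E] [BorelSpace E] (ν : Measure E) [ν.IsAddHaarMeasure]

theorem lintegral_exp_neg_mul_norm_lt_top {a : ℝ} (ha : 0 < a) :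
    ∫⁻ y, ENNReal.ofReal (Real.exp (-(a * ‖y‖))) ∂ν < ∞ := by
  set k := finrank ℝ E + 1
  set C := Real.exp a * k.factorial / a ^ k
  calc ∫⁻ y, ENNReal.ofReal (Real.exp (-(a * ‖y‖))) ∂ν
      ≤ ∫⁻ y, ENNReal.ofReal C * ENNReal.ofReal ((1 + ‖y‖) ^ (-(k : ℝ))) ∂ν := by
        refine lintegral_mono fun y => ?_
        rw [← ENNReal.ofReal_mul (by positivity)]
        exact ENNReal.ofReal_le_ofReal
          (Real.exp_neg_mul_le_mul_one_add_rpow_neg ha (norm_nonneg y) k)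
    _ = ENNReal.ofReal C * ∫⁻ y, ENNReal.ofReal ((1 + ‖y‖) ^ (-(k : ℝ))) ∂ν :=
        lintegral_const_mul' _ _ ENNReal.ofReal_ne_top
    _ < ∞ := ENNReal.mul_lt_top ENNReal.ofReal_lt_top
        (finite_integral_one_add_norm (by simp [k]))

theorem tendsto_withDensity_exp_neg_mul_norm_compl_closedBall {a : ℝ} (ha : 0 < a) :
    Tendsto (fun r => ν.withDensity (fun y => ENNReal.ofReal (Real.exp (-(a * ‖y‖))))
      (Metric.closedBall 0 r)ᶜ) atTop (𝓝 0) := by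
  have := isFiniteMeasure_withDensity (lintegral_exp_neg_mul_norm_lt_top ν ha).ne
  simpa using tendsto_measure_compl_closedBall_of_isTightMeasureSet isTightMeasureSet_singleton
    (0 : E) (S := {ν.withDensity fun y => ENNReal.ofReal (Real.exp (-(a * ‖y‖)))})

variable {φ : ℝ → ℝ}

theorem mul_measure_le_withDensity_smul (hmono : MonotoneOn φ (Ici 0)) {A : Set E}
    (hA : MeasurableSet A) {c : ℝ} (hAc : A ⊆ Metric.closedBall 0 c) {t : ℝ} (ht : 1 ≤ t) :
    ENNReal.ofReal (Real.exp (-φ (t * c))) * ν A ≤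
      ν.withDensity (fun x => ENNReal.ofReal (Real.exp (-φ ‖x‖))) (t • A) := calc
  _ ≤ ENNReal.ofReal (Real.exp (-φ (t * c))) * ν (t • A) := by
    rw [Measure.addHaar_smul_of_nonneg ν (by linarith)]
    gcongr
    exact le_mul_of_one_le_left' (ENNReal.one_le_ofReal.2 (one_le_pow₀ ht))
  _ ≤ _ := by
    refine mul_measure_le_withDensity_apply ν (hA.const_smul_of_ne_zero (by linarith)) ?_
    rintro _ ⟨z, hz, rfl⟩
    have htz : ‖t • z‖ ≤ t * c := by
      rw [norm_smul, Real.norm_of_nonneg (by linarith)]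
      exact mul_le_mul_of_nonneg_left (by simpa using hAc hz) (by linarith)
    exact ENNReal.ofReal_le_ofReal (Real.exp_le_exp.2 (neg_le_neg
      (hmono (norm_nonneg _) ((norm_nonneg _).trans htz) htz)))

theorem eventually_withDensity_compl_closedBall_lt_smul (hmono : MonotoneOn φ (Ici 0))
    (hconv : ConvexOn ℝ (Ici 0) φ) (hnc : ∃ s t : ℝ, 0 ≤ s ∧ 0 ≤ t ∧ φ s ≠ φ t) {U : Set E}
    (hU : IsOpen U) {R : ℝ} (hUR : (U ∩ Metric.ball 0 R).Nonempty) :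
    ∀ᶠ t in atTop, ν.withDensity (fun x => ENNReal.ofReal (Real.exp (-φ ‖x‖)))
      (Metric.closedBall 0 (t * R))ᶜ <
      ν.withDensity (fun x => ENNReal.ofReal (Real.exp (-φ ‖x‖))) (t • U) := by
  obtain ⟨y, hyU, hyR⟩ := hUR
  rw [Metric.mem_ball, dist_zero_right] at hyR
  obtain ⟨c, hyc, hcR⟩ := exists_between hyR
  have hc : 0 < c := (norm_nonneg y).trans_lt hyc
  have hR : 0 < R := hc.trans hcR
  set A := U ∩ Metric.ball 0 c
  have hA : IsOpen A := hU.inter Metric.isOpen_ball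
  have hνA : 0 < ν A := hA.measure_pos ν ⟨y, hyU, by simpa using hyc⟩
  obtain ⟨m, hm, s, hgrowth⟩ := hconv.exists_pos_add_mul_le hmono hnc
  have ha : 0 < m * (1 - c / R) := mul_pos hm (by rw [sub_pos, div_lt_one hR]; exact hcR)
  have htail := (tendsto_withDensity_exp_neg_mul_norm_compl_closedBall ν ha).comp
    (tendsto_id.atTop_mul_const hR)
  filter_upwards [eventually_ge_atTop 1, eventually_ge_atTop (s / c),
    htail.eventually_lt_const hνA] with t ht hts htail
  have htc : c / R * (t * R) = t * c := by field_simp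
  have hupper := withDensity_compl_closedBall_le_mul ν hm.le hgrowth (div_nonneg hc.le hR.le)
    ((div_le_one hR).2 hcR.le) (ρ := t * R) (by nlinarith) (by rwa [htc, ← div_le_iff₀ hc])
  rw [htc] at hupper
  have hlower := mul_measure_le_withDensity_smul ν hmono hA.measurableSet
    (inter_subset_right.trans Metric.ball_subset_closedBall) ht
  calc _ ≤ _ := hupper
    _ < ENNReal.ofReal (Real.exp (-φ (t * c))) * ν A :=
      (ENNReal.mul_lt_mul_iff_right (by simpa using Real.exp_pos _) ENNReal.ofReal_ne_top).2 htail
    _ ≤ _ := hlower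
    _ ≤ _ := measure_mono (smul_set_mono inter_subset_left)

end AddHaar

theorem stmt0_general (n : ℕ)
    (φ : ℝ → ℝ)
    (hmono : MonotoneOn φ (Set.Ici 0))
    (hconv : ConvexOn ℝ (Set.Ici 0) φ)
    (hnc : ∃ s t : ℝ, 0 ≤ s ∧ 0 ≤ t ∧ φ s ≠ φ t)
    (μ : Measure (EuclideanSpace ℝ (Fin n)))
    (hμ : μ = volume.withDensity fun x => ENNReal.ofReal (Real.exp (-φ ‖x‖)))
    (hprob : IsProbabilityMeasure μ)
    (K : Set (EuclideanSpace ℝ (Fin n)))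
    (hKcomp : IsCompact K) (hKconv : Convex ℝ K)
    (R : ℝ) (hR : 0 < R)
    (t₀ : ℝ)
    (h : ∀ t ≥ t₀, μ (Metric.closedBall (0 : EuclideanSpace ℝ (Fin n)) (t * R)) ≤ μ (t • K)) :
    Metric.closedBall (0 : EuclideanSpace ℝ (Fin n)) R ⊆ K := by
  intro x hx
  by_contra hxK
  obtain ⟨f, u, hfK, hfx⟩ := geometric_hahn_banach_closed_point hKconv hKcomp.isClosed hxK
  have hU : IsOpen {y | u < f y} := isOpen_lt continuous_const f.continuous
  have hUR : ({y | u < f y} ∩ Metric.ball 0 R).Nonempty := by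
    rw [← closure_ball 0 hR.ne'] at hx
    exact mem_closure_iff.1 hx _ hU hfx
  obtain ⟨t, ⟨ht₀, ht⟩, hlt⟩ := (((eventually_ge_atTop t₀).and (eventually_gt_atTop 0)).and
    (hμ ▸ eventually_withDensity_compl_closedBall_lt_smul volume hmono hconv hnc hU hUR)).exists
  have hdisj : t • {y | u < f y} ⊆ (t • K)ᶜ := by
    rintro _ ⟨y, hy, rfl⟩ ⟨z, hz, hzy⟩
    have hfzy : t * f z = t * f y := by simpa using congrArg f hzy
    have hy : u < f y := hy
    nlinarith [hfK z hz]
  have hcompl : μ (t • K)ᶜ ≤ μ (Metric.closedBall 0 (t * R))ᶜ := by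
    rw [prob_compl_eq_one_sub (hKcomp.smul t).measurableSet,
      prob_compl_eq_one_sub measurableSet_closedBall]
    exact tsub_le_tsub_left (h t ht₀) 1
  exact (hlt.trans_le ((measure_mono hdisj).trans hcompl)).false

theorem stmt0 (n : ℕ) (hn : 1 ≤ n)
    (φ : ℝ → ℝ)
    (hmono : MonotoneOn φ (Set.Ici 0))
    (hconv : ConvexOn ℝ (Set.Ici 0) φ)
    (hnonneg : ∀ t ∈ Set.Ici (0 : ℝ), 0 ≤ φ t)
    (hnc : ∃ s t : ℝ, 0 ≤ s ∧ 0 ≤ t ∧ φ s ≠ φ t)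
    (μ : Measure (EuclideanSpace ℝ (Fin n)))
    (hμ : μ = volume.withDensity fun x => ENNReal.ofReal (Real.exp (-φ ‖x‖)))
    (hprob : IsProbabilityMeasure μ)
    (K : Set (EuclideanSpace ℝ (Fin n)))
    (hKcomp : IsCompact K) (hKconv : Convex ℝ K)
    (hKint : (interior K).Nonempty) (hKsymm : K = -K)
    (R : ℝ) (hR : 0 < R)
    (t₀ : ℝ) (ht₀ : 0 < t₀)
    (h : ∀ t ≥ t₀, μ (Metric.closedBall (0 : EuclideanSpace ℝ (Fin n)) (t * R)) ≤ μ (t • K)) :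
    Metric.closedBall (0 : EuclideanSpace ℝ (Fin n)) R ⊆ K :=
  stmt0_general n φ hmono hconv hnc μ hμ hprob K hKcomp hKconv R hR t₀ h
end

section
/- Let n ≥ 1, let φ : [0,∞) → [0,∞) be an increasing, convex, non-constant function, and let μ be the probability measure on ℝⁿ with density x ↦ e^{-φ(|x|)}. Then for every R > 0, limsup_{t→∞} ln(μ((tR·B₂ⁿ)^c)) / φ(tR) = -1. -/
open MeasureTheory Filter Set Pointwise Metric

section Aux

lemma stmt1_linear_lb {φ : ℝ → ℝ} (hmono : MonotoneOn φ (Set.Ici 0))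
    (hconv : ConvexOn ℝ (Set.Ici 0) φ)
    (hnonneg : ∀ t ∈ Set.Ici (0:ℝ), 0 ≤ φ t)
    (hnc : ∃ s t : ℝ, 0 ≤ s ∧ 0 ≤ t ∧ φ s ≠ φ t) :
    ∃ m t₀ : ℝ, 0 < m ∧ 0 ≤ t₀ ∧ ∀ u, 0 ≤ u → m * (u - t₀) ≤ φ u := by
  obtain ⟨s, t, hs, ht, hne⟩ := hnc
  wlog hst : s < t generalizing s t
  · exact this t s ht hs hne.symm (lt_of_le_of_ne (not_lt.1 hst) (ne_of_apply_ne φ hne).symm)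
  have hφst : φ s < φ t := lt_of_le_of_ne (hmono hs ht hst.le) hne
  set m := (φ t - φ s) / (t - s) with hm
  have hmpos : 0 < m := div_pos (by linarith) (by linarith)
  refine ⟨m, t, hmpos, ht, fun u hu => ?_⟩
  rcases le_or_gt u t with h | h
  · have : m * (u - t) ≤ 0 := mul_nonpos_of_nonneg_of_nonpos hmpos.le (by linarith)
    exact this.trans (hnonneg u hu)
  · have hslope := hconv.slope_mono_adjacent hs (le_of_lt (ht.trans_lt h) : (0:ℝ) ≤ u) hst h
    have h1 : m * (u - t) ≤ φ u - φ t := by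
      rw [hm]
      calc (φ t - φ s) / (t - s) * (u - t) ≤ (φ u - φ t) / (u - t) * (u - t) := by
            apply mul_le_mul_of_nonneg_right hslope (by linarith)
        _ = φ u - φ t := div_mul_cancel₀ _ (by linarith)
    have := hnonneg t ht
    linarith

lemma stmt1_exp_le_aux (n : ℕ) {b : ℝ} (hb : 0 < b) {s : ℝ} (hs : 0 ≤ s) :
    Real.exp (-(b * s)) ≤ (max 1 ((n+1)/b)) ^ (n+1) * (1 + s) ^ (-((n:ℝ)+1)) := by
  set K := max 1 ((n+1)/b) with hK
  have hK1 : (1:ℝ) ≤ K := le_max_left _ _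
  have hKpos : 0 < K := lt_of_lt_of_le one_pos hK1
  have h1s : (0:ℝ) < 1 + s := by linarith
  have hstep : (1 + s) ≤ K * (1 + b * s / (n+1)) := by
    have h2 : (n+1)/b ≤ K := le_max_right _ _
    have h3 : s = ((n+1)/b) * (b * s / (n+1)) := by
      field_simp
    calc (1:ℝ) + s = 1 + ((n+1)/b) * (b * s / (n+1)) := by rw [← h3]
      _ ≤ K + K * (b * s / (n+1)) := by
          have : (0:ℝ) ≤ b * s / (n+1) := by positivity
          have := mul_le_mul_of_nonneg_right h2 this
          linarith
      _ = K * (1 + b * s / (n+1)) := by ring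
  have hexp : (1 + b * s / (n+1)) ^ (n+1) ≤ Real.exp (b * s) := by
    have h4 : (1 + b * s / (n+1)) ≤ Real.exp (b * s / (n+1)) := by
      have := Real.add_one_le_exp (b * s / (n+1)); linarith
    calc (1 + b * s / (n+1)) ^ (n+1) ≤ Real.exp (b * s / (n+1)) ^ (n+1) := by
          apply pow_le_pow_left₀ (by positivity) h4
      _ = Real.exp (((n:ℝ)+1) * (b * s / (n+1))) := by
          rw [← Real.exp_nat_mul]; congr 1; push_cast; ring
      _ = Real.exp (b * s) := by
          congr 1; field_simp
  have hpow : (1 + s) ^ (n+1) ≤ K ^ (n+1) * Real.exp (b * s) := by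
    calc (1 + s) ^ (n+1) ≤ (K * (1 + b * s / (n+1))) ^ (n+1) :=
          pow_le_pow_left₀ (by positivity) hstep _
      _ = K ^ (n+1) * (1 + b * s / (n+1)) ^ (n+1) := mul_pow _ _ _
      _ ≤ K ^ (n+1) * Real.exp (b * s) := by
          apply mul_le_mul_of_nonneg_left hexp (by positivity)
  have h5 : (0:ℝ) < Real.exp (b*s) := Real.exp_pos _
  have h6 : (0:ℝ) < (1+s)^(n+1) := by positivity
  rw [Real.rpow_neg h1s.le, show ((n:ℝ)+1) = ((n+1 : ℕ) : ℝ) by push_cast; ring,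
    Real.rpow_natCast, Real.exp_neg, inv_eq_one_div, ← div_eq_mul_inv,
    div_le_div_iff₀ h5 h6]
  linarith

lemma stmt1_fin_int (n : ℕ) (hn : 1 ≤ n) {b : ℝ} (hb : 0 < b) :
    (∫⁻ x : EuclideanSpace ℝ (Fin n), ENNReal.ofReal (Real.exp (-(b * ‖x‖)))) < ⊤ := by
  have hr : (Module.finrank ℝ (EuclideanSpace ℝ (Fin n)) : ℝ) < (n:ℝ)+1 := by
    rw [finrank_euclideanSpace_fin]; linarith
  calc (∫⁻ x : EuclideanSpace ℝ (Fin n), ENNReal.ofReal (Real.exp (-(b * ‖x‖))))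
      ≤ ∫⁻ x : EuclideanSpace ℝ (Fin n), ENNReal.ofReal ((max 1 ((n+1)/b)) ^ (n+1)) * ENNReal.ofReal ((1 + ‖x‖) ^ (-((n:ℝ)+1))) := by
        apply lintegral_mono fun x => ?_
        rw [← ENNReal.ofReal_mul (by positivity)]
        exact ENNReal.ofReal_le_ofReal (stmt1_exp_le_aux n hb (norm_nonneg x))
    _ = ENNReal.ofReal ((max 1 ((n+1)/b)) ^ (n+1)) * ∫⁻ x : EuclideanSpace ℝ (Fin n), ENNReal.ofReal ((1 + ‖x‖) ^ (-((n:ℝ)+1))) :=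
        lintegral_const_mul' _ _ ENNReal.ofReal_ne_top
    _ < ⊤ := ENNReal.mul_lt_top ENNReal.ofReal_lt_top (finite_integral_one_add_norm hr)

variable {n : ℕ} {φ : ℝ → ℝ} {μ : Measure (EuclideanSpace ℝ (Fin n))}

lemma stmt1_meas_phi (hmono : MonotoneOn φ (Set.Ici 0)) :
    Measurable fun x : EuclideanSpace ℝ (Fin n) => φ ‖x‖ := by
  have hψ : Monotone fun s : ℝ => φ (max s 0) := fun a b hab =>
    hmono (mem_Ici.2 (le_max_right _ _)) (mem_Ici.2 (le_max_right _ _))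
      (max_le_max hab le_rfl)
  have : (fun x : EuclideanSpace ℝ (Fin n) => φ ‖x‖)
      = (fun s : ℝ => φ (max s 0)) ∘ (fun x : EuclideanSpace ℝ (Fin n) => ‖x‖) := by
    funext x; simp [max_eq_left (norm_nonneg x)]
  rw [this]
  exact hψ.measurable.comp measurable_norm

lemma stmt1_mu_compl_eq
    (hμ : μ = volume.withDensity fun x => ENNReal.ofReal (Real.exp (-φ ‖x‖)))
    (r : ℝ) :
    μ ((closedBall (0 : EuclideanSpace ℝ (Fin n)) r)ᶜ)
      = ∫⁻ x in (closedBall (0 : EuclideanSpace ℝ (Fin n)) r)ᶜ,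
          ENNReal.ofReal (Real.exp (-φ ‖x‖)) := by
  rw [hμ, withDensity_apply _ measurableSet_closedBall.compl]

lemma stmt1_shell_lb (hn : 1 ≤ n)
    (hmono : MonotoneOn φ (Set.Ici 0))
    (hμ : μ = volume.withDensity fun x => ENNReal.ofReal (Real.exp (-φ ‖x‖)))
    [IsProbabilityMeasure μ]
    {r h : ℝ} (hr : 1 ≤ r) (hh : 0 < h) :
    (volume (ball (0:EuclideanSpace ℝ (Fin n)) 1)).toReal * h * Real.exp (-φ (r+h))
      ≤ (μ ((closedBall (0 : EuclideanSpace ℝ (Fin n)) r)ᶜ)).toReal := by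
  set E := EuclideanSpace ℝ (Fin n)
  set S := closedBall (0:E) (r+h) \ closedBall (0:E) r with hS
  have hr0 : (0:ℝ) ≤ r := by linarith
  have hsub : S ⊆ (closedBall (0:E) r)ᶜ := fun x hx => hx.2
  have hvol : volume S = ENNReal.ofReal ((r+h)^n - r^n) * volume (ball (0:E) 1) := by
    rw [hS, measure_diff (closedBall_subset_closedBall (by linarith))
      measurableSet_closedBall.nullMeasurableSet measure_closedBall_lt_top.ne,
      Measure.addHaar_closedBall _ _ (by linarith : (0:ℝ) ≤ r+h),
      Measure.addHaar_closedBall _ _ hr0, finrank_euclideanSpace_fin,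
      ENNReal.ofReal_sub _ (by positivity), ENNReal.sub_mul (fun _ _ => measure_ball_lt_top.ne)]
  have hlb : ∀ x ∈ S, ENNReal.ofReal (Real.exp (-φ (r+h)))
      ≤ ENNReal.ofReal (Real.exp (-φ ‖x‖)) := by
    intro x hx
    obtain ⟨hx1, hx2⟩ := hx
    rw [mem_closedBall, dist_zero_right] at hx1
    apply ENNReal.ofReal_le_ofReal
    apply Real.exp_le_exp.2
    simp only [neg_le_neg_iff]
    exact hmono (mem_Ici.2 (norm_nonneg x)) (mem_Ici.2 (by linarith)) hx1
  have key : ENNReal.ofReal (Real.exp (-φ (r+h))) * volume S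
      ≤ μ ((closedBall (0:E) r)ᶜ) := by
    rw [stmt1_mu_compl_eq hμ]
    calc ENNReal.ofReal (Real.exp (-φ (r+h))) * volume S
        = ∫⁻ _ in S, ENNReal.ofReal (Real.exp (-φ (r+h))) := (setLIntegral_const _ _).symm
      _ ≤ ∫⁻ x in S, ENNReal.ofReal (Real.exp (-φ ‖x‖)) :=
          setLIntegral_mono_ae ((ENNReal.measurable_ofReal.comp
            (Real.measurable_exp.comp ((stmt1_meas_phi hmono).neg))).aemeasurable) (ae_of_all _ hlb)
      _ ≤ _ := lintegral_mono_set hsub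
  have hfin : μ ((closedBall (0:E) r)ᶜ) ≠ ⊤ := measure_ne_top μ _
  have := ENNReal.toReal_mono hfin key
  refine le_trans ?_ this
  rw [hvol, ← mul_assoc, ENNReal.toReal_mul, ENNReal.toReal_mul, ENNReal.toReal_ofReal
    (Real.exp_nonneg _), ENNReal.toReal_ofReal (by
      have := pow_le_pow_left₀ hr0 (by linarith : r ≤ r + h) n; linarith)]
  have hshell : h ≤ (r+h)^n - r^n := by
    obtain ⟨m, rfl⟩ : ∃ m, n = m + 1 := ⟨n-1, (Nat.succ_pred_eq_of_pos hn).symm⟩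
    have h1 : r^m * (r+h) ≤ (r+h)^m * (r+h) := by
      apply mul_le_mul_of_nonneg_right (pow_le_pow_left₀ hr0 (by linarith) m) (by linarith)
    have h2 : (1:ℝ) ≤ r^m := one_le_pow₀ hr
    have h3 : (r+h)^(m+1) = (r+h)^m * (r+h) := by ring
    have h4 : r^m*(r+h) = r^(m+1) + h*r^m := by ring
    have h5 : h*1 ≤ h*r^m := mul_le_mul_of_nonneg_left h2 hh.le
    linarith
  have hvb : (0:ℝ) ≤ (volume (ball (0:E) 1)).toReal := ENNReal.toReal_nonneg
  calc (volume (ball (0:E) 1)).toReal * h * Real.exp (-φ (r+h))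
      ≤ (volume (ball (0:E) 1)).toReal * ((r+h)^n - r^n) * Real.exp (-φ (r+h)) := by
        apply mul_le_mul_of_nonneg_right (mul_le_mul_of_nonneg_left hshell hvb) (Real.exp_nonneg _)
    _ = Real.exp (-φ (r+h)) * ((r+h)^n - r^n) * (volume (ball (0:E) 1)).toReal := by ring

lemma stmt1_Cδ_lt_top (hn : 1 ≤ n)
    {δ m t₀ : ℝ} (hδ : 0 < δ) (hm : 0 < m)
    (hlin : ∀ u, 0 ≤ u → m * (u - t₀) ≤ φ u) :
    (∫⁻ x : EuclideanSpace ℝ (Fin n), ENNReal.ofReal (Real.exp (-(δ * φ ‖x‖)))) < ⊤ := by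
  calc (∫⁻ x : EuclideanSpace ℝ (Fin n), ENNReal.ofReal (Real.exp (-(δ * φ ‖x‖))))
      ≤ ∫⁻ x : EuclideanSpace ℝ (Fin n), ENNReal.ofReal (Real.exp (δ * m * t₀))
          * ENNReal.ofReal (Real.exp (-(δ * m * ‖x‖))) := by
        apply lintegral_mono fun x => ?_
        rw [← ENNReal.ofReal_mul (Real.exp_nonneg _), ← Real.exp_add]
        apply ENNReal.ofReal_le_ofReal
        apply Real.exp_le_exp.2
        have := hlin ‖x‖ (norm_nonneg x)
        have h2 := mul_le_mul_of_nonneg_left this hδ.le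
        nlinarith
    _ = ENNReal.ofReal (Real.exp (δ * m * t₀))
          * ∫⁻ x : EuclideanSpace ℝ (Fin n), ENNReal.ofReal (Real.exp (-(δ * m * ‖x‖))) :=
        lintegral_const_mul' _ _ ENNReal.ofReal_ne_top
    _ < ⊤ := ENNReal.mul_lt_top ENNReal.ofReal_lt_top (stmt1_fin_int n hn (by positivity))

lemma stmt1_upper_bd (hmono : MonotoneOn φ (Set.Ici 0))
    (hμ : μ = volume.withDensity fun x => ENNReal.ofReal (Real.exp (-φ ‖x‖)))
    {δ r : ℝ} (hδ1 : δ < 1) (hr : 0 ≤ r) (hφr : 0 ≤ φ r) :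
    μ ((closedBall (0 : EuclideanSpace ℝ (Fin n)) r)ᶜ)
      ≤ ENNReal.ofReal (Real.exp (-((1-δ) * φ r)))
        * ∫⁻ x : EuclideanSpace ℝ (Fin n), ENNReal.ofReal (Real.exp (-(δ * φ ‖x‖))) := by
  rw [stmt1_mu_compl_eq hμ]
  calc (∫⁻ x in (closedBall (0 : EuclideanSpace ℝ (Fin n)) r)ᶜ,
          ENNReal.ofReal (Real.exp (-φ ‖x‖)))
      ≤ ∫⁻ x in (closedBall (0 : EuclideanSpace ℝ (Fin n)) r)ᶜ,
          ENNReal.ofReal (Real.exp (-((1-δ) * φ r))) * ENNReal.ofReal (Real.exp (-(δ * φ ‖x‖))) := by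
        have hgm : Measurable fun x : EuclideanSpace ℝ (Fin n) =>
            ENNReal.ofReal (Real.exp (-(δ * φ ‖x‖))) :=
          (((stmt1_meas_phi hmono).const_mul δ).neg.exp).ennreal_ofReal
        apply setLIntegral_mono_ae (hgm.const_mul _).aemeasurable
        apply ae_of_all _ fun x hx => ?_
        rw [mem_compl_iff, mem_closedBall, dist_zero_right, not_le] at hx
        rw [← ENNReal.ofReal_mul (Real.exp_nonneg _), ← Real.exp_add]
        apply ENNReal.ofReal_le_ofReal
        apply Real.exp_le_exp.2
        have hφx : φ r ≤ φ ‖x‖ := hmono (mem_Ici.2 hr) (mem_Ici.2 (norm_nonneg x)) hx.le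
        nlinarith
    _ ≤ ∫⁻ x : EuclideanSpace ℝ (Fin n),
          ENNReal.ofReal (Real.exp (-((1-δ) * φ r))) * ENNReal.ofReal (Real.exp (-(δ * φ ‖x‖))) :=
        setLIntegral_le_lintegral _ _
    _ = _ := lintegral_const_mul' _ _ ENNReal.ofReal_ne_top

end Aux

set_option maxHeartbeats 2000000 in
theorem stmt1 (n : ℕ) (hn : 1 ≤ n)
    (φ : ℝ → ℝ)
    (hmono : MonotoneOn φ (Set.Ici 0))
    (hconv : ConvexOn ℝ (Set.Ici 0) φ)
    (hnonneg : ∀ t ∈ Set.Ici (0 : ℝ), 0 ≤ φ t)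
    (hnc : ∃ s t : ℝ, 0 ≤ s ∧ 0 ≤ t ∧ φ s ≠ φ t)
    (μ : Measure (EuclideanSpace ℝ (Fin n)))
    (hμ : μ = volume.withDensity fun x => ENNReal.ofReal (Real.exp (-φ ‖x‖)))
    (hprob : IsProbabilityMeasure μ)
    (R : ℝ) (hR : 0 < R) :
    Filter.limsup
      (fun t =>
        Real.log
            (μ (Metric.closedBall (0 : EuclideanSpace ℝ (Fin n)) (t * R))ᶜ).toReal /
          φ (t * R))
      Filter.atTop = -1 := by
  haveI := hprob
  set E := EuclideanSpace ℝ (Fin n)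
  set F : ℝ → ℝ := fun r => (μ ((closedBall (0:E) r)ᶜ)).toReal with hF
  set f : ℝ → ℝ := fun t => Real.log (F (t * R)) / φ (t * R) with hf
  obtain ⟨m, t₀, hm, ht₀, hlin⟩ := stmt1_linear_lb hmono hconv hnonneg hnc
  -- φ tends to infinity
  have hφtend : Tendsto φ atTop atTop := by
    apply tendsto_atTop_mono' atTop (f₁ := fun r => m * (r - t₀))
    · filter_upwards [eventually_ge_atTop (0:ℝ)] with r hr using hlin r hr
    · exact Tendsto.const_mul_atTop hm (tendsto_atTop_add_const_right _ _ tendsto_id)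
  have hrt : Tendsto (fun t : ℝ => t * R) atTop atTop :=
    Tendsto.atTop_mul_const hR tendsto_id
  have hφcomp : Tendsto (fun t : ℝ => φ (t * R)) atTop atTop := hφtend.comp hrt
  -- basic facts about F
  have hc : 0 < (volume (ball (0:E) 1)).toReal :=
    ENNReal.toReal_pos (measure_ball_pos volume 0 one_pos).ne' measure_ball_lt_top.ne
  set c := (volume (ball (0:E) 1)).toReal with hcdef
  have hFpos : ∀ r : ℝ, 1 ≤ r → 0 < F r := by
    intro r hr
    have := stmt1_shell_lb hn hmono hμ (r := r) (h := 1) hr one_pos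
    have hpos : 0 < c * 1 * Real.exp (-φ (r+1)) := by positivity
    exact lt_of_lt_of_le hpos this
  have hFanti : ∀ r r' : ℝ, r ≤ r' → F r' ≤ F r := by
    intro r r' hrr
    apply ENNReal.toReal_mono (measure_ne_top μ _)
    exact measure_mono (compl_subset_compl.2 (closedBall_subset_closedBall hrr))
  have hFle1 : ∀ r : ℝ, F r ≤ 1 := by
    intro r
    rw [hF]
    have := prob_le_one (μ := μ) (s := (closedBall (0:E) r)ᶜ)
    calc (μ ((closedBall (0:E) r)ᶜ)).toReal ≤ (1 : ENNReal).toReal :=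
      ENNReal.toReal_mono ENNReal.one_ne_top this
    _ = 1 := ENNReal.toReal_one
  -- Part A : eventual upper bound
  have upperA : ∀ ε : ℝ, 0 < ε → ε < 1 → ∀ᶠ t in atTop, f t ≤ -1 + ε := by
    intro ε hε hε1
    set δ := ε / 2 with hδdef
    have hδ : 0 < δ := by positivity
    have hδ1 : δ < 1 := by linarith
    set Cδ := ∫⁻ x : E, ENNReal.ofReal (Real.exp (-(δ * φ ‖x‖))) with hCδ
    have hCδtop : Cδ < ⊤ := stmt1_Cδ_lt_top hn hδ hm hlin
    set C := Real.log Cδ.toReal with hCdef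
    have hlog : ∀ r : ℝ, 1 ≤ r → Real.log (F r) ≤ -((1-δ) * φ r) + C := by
      intro r hr
      have hr0 : (0:ℝ) ≤ r := by linarith
      have hub := stmt1_upper_bd hmono hμ hδ1 hr0 (hnonneg r hr0)
      have hubR : F r ≤ Real.exp (-((1-δ) * φ r)) * Cδ.toReal := by
        have := ENNReal.toReal_mono
          (by exact (ENNReal.mul_lt_top ENNReal.ofReal_lt_top hCδtop).ne) hub
        rwa [ENNReal.toReal_mul, ENNReal.toReal_ofReal (Real.exp_nonneg _)] at this
      have hFr := hFpos r hr
      have hCpos : 0 < Cδ.toReal := by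
        by_contra hcon
        push_neg at hcon
        nlinarith [Real.exp_pos (-((1-δ) * φ r))]
      calc Real.log (F r) ≤ Real.log (Real.exp (-((1-δ) * φ r)) * Cδ.toReal) :=
            Real.log_le_log hFr hubR
        _ = -((1-δ) * φ r) + C := by
            rw [Real.log_mul (Real.exp_ne_zero _) hCpos.ne', Real.log_exp, hCdef]
    filter_upwards [hrt.eventually_ge_atTop 1, hφcomp.eventually_ge_atTop 1,
      hφcomp.eventually_ge_atTop (C / δ)] with t h1 h2 h3
    have hφpos : 0 < φ (t * R) := lt_of_lt_of_le one_pos h2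
    have hCle : C ≤ δ * φ (t * R) := by
      rw [div_le_iff₀ hδ] at h3; nlinarith
    rw [hf]
    have hnum : Real.log (F (t*R)) ≤ (-1 + ε) * φ (t * R) := by
      have := hlog (t*R) h1
      nlinarith
    calc Real.log (F (t*R)) / φ (t*R) ≤ ((-1 + ε) * φ (t * R)) / φ (t*R) :=
          (div_le_div_iff_of_pos_right hφpos).2 hnum
      _ = -1 + ε := mul_div_cancel_right₀ _ hφpos.ne'
  -- Part B : frequent lower bound
  have lowerB : ∀ ε : ℝ, 0 < ε → ∃ᶠ t in atTop, -1 - ε ≤ f t := by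
    intro ε hε
    by_contra hcon
    rw [Filter.not_frequently] at hcon
    simp only [not_le] at hcon
    obtain ⟨T, hT⟩ := (hcon.and ((hrt.eventually_ge_atTop 1).and
      (hφcomp.eventually_ge_atTop 1))).exists_forall_of_atTop
    set y : ℝ → ℝ := fun r => -Real.log (F r) with hy
    set r₁ : ℝ := max (T * R) 1 with hr₁
    have H : ∀ r : ℝ, r₁ ≤ r → (1 + ε) * φ r < y r ∧ 1 ≤ φ r ∧ 1 ≤ r := by
      intro r hr
      have hrR : T * R ≤ r := le_trans (le_max_left _ _) hr
      have hr1 : (1:ℝ) ≤ r := le_trans (le_max_right _ _) hr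
      have ht : T ≤ r / R := by
        rw [le_div_iff₀ hR]; linarith
      obtain ⟨hft, h1t, h2t⟩ := hT (r / R) ht
      simp only [hf] at hft
      rw [div_mul_cancel₀ _ hR.ne'] at hft h1t h2t
      have hφpos : 0 < φ r := lt_of_lt_of_le one_pos h2t
      rw [div_lt_iff₀ hφpos] at hft
      refine ⟨?_, h2t, hr1⟩
      simp only [hy]
      nlinarith
    -- key step inequality
    have KEY : ∀ r h : ℝ, r₁ ≤ r → 0 < h →
        (1 + ε) * (y r + Real.log c + Real.log h) < y (r + h) := by
      intro r h hr hh
      obtain ⟨hyr, hφr1, hr1⟩ := H r hr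
      obtain ⟨hyrh, hφrh1, _⟩ := H (r + h) (by linarith)
      have hshell := stmt1_shell_lb hn hmono hμ (r := r) (h := h) hr1 hh
      have hFr := hFpos r hr1
      have hloglb : Real.log c + Real.log h - φ (r + h) ≤ Real.log (F r) := by
        have hpos : 0 < c * h * Real.exp (-φ (r+h)) := by positivity
        have := Real.log_le_log hpos hshell
        rwa [Real.log_mul (by positivity) (Real.exp_ne_zero _),
          Real.log_mul hc.ne' hh.ne', Real.log_exp] at this
      -- φ (r+h) < y (r+h) / (1+ε)
      have h1 : (1 + ε) * φ (r + h) < y (r + h) := hyrh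
      have h2 : y r + Real.log c + Real.log h ≤ φ (r + h) := by
        simp only [hy]; linarith
      nlinarith
    -- set up constants for the induction
    set δ' := ε / (2 * (1 + ε)) with hδ'
    have hδ'pos : 0 < δ' := by positivity
    have hδ'mul : (1 + ε) * δ' = ε / 2 := by
      rw [hδ']; field_simp
    set a := Real.exp (-δ') with ha
    have ha1 : a < 1 := by
      rw [ha, Real.exp_lt_one_iff]; linarith
    have ha0 : 0 < a := Real.exp_pos _
    set Y₀ := (2 / ε) * (1 + (1 + ε) * |Real.log c|) + 1 with hY₀
    have hY₀pos : 0 < Y₀ := by positivity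
    have hY₀prop : ∀ z : ℝ, Y₀ ≤ z → 1 - (1 + ε) * Real.log c ≤ (ε / 2) * z := by
      intro z hz
      have h1 : 1 + (1 + ε) * |Real.log c| ≤ (ε/2) * Y₀ := by
        rw [hY₀]
        have : (ε/2) * ((2/ε) * (1 + (1 + ε) * |Real.log c|) + 1)
            = (1 + (1 + ε) * |Real.log c|) + ε/2 := by field_simp
        rw [this]; linarith
      have h2 : -Real.log c ≤ |Real.log c| := neg_le_abs _
      have h2' : (1+ε)*(-Real.log c) ≤ (1+ε)*|Real.log c| :=
        mul_le_mul_of_nonneg_left h2 (by linarith)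
      have h3 : (ε/2) * Y₀ ≤ (ε/2) * z :=
        mul_le_mul_of_nonneg_left hz (by positivity)
      nlinarith
    -- choose starting radius
    obtain ⟨r₀, hr₀⟩ := ((hφtend.eventually_ge_atTop Y₀).and
      (eventually_ge_atTop r₁)).exists
    obtain ⟨hφr₀, hr₀r₁⟩ := hr₀
    have hyr₀ : Y₀ ≤ y r₀ := by
      obtain ⟨hyr, hφr1, _⟩ := H r₀ hr₀r₁
      nlinarith
    -- the recursive sequence of radii
    set g : ℕ → ℝ := fun k => Nat.rec r₀ (fun k gk => gk + Real.exp (-(δ' * (Y₀ + k)))) k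
      with hg
    have hg0 : g 0 = r₀ := rfl
    have hgs : ∀ k : ℕ, g (k+1) = g k + Real.exp (-(δ' * (Y₀ + k))) := fun k => rfl
    set q := Real.exp (-(δ' * Y₀)) / (1 - a) with hq
    have hqpos : 0 < q := by
      apply div_pos (Real.exp_pos _); linarith
    -- main induction
    have IND : ∀ k : ℕ, r₁ ≤ g k ∧ g k ≤ r₀ + q * (1 - a ^ k) ∧ Y₀ + k ≤ y (g k) := by
      intro k
      induction k with
      | zero =>
        refine ⟨hr₀r₁, by simp [hg0], by simpa [hg0] using hyr₀⟩
      | succ k ih =>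
        obtain ⟨ih1, ih2, ih3⟩ := ih
        have hk0 : (0:ℝ) ≤ k := Nat.cast_nonneg k
        have hhk : (0:ℝ) < Real.exp (-(δ' * (Y₀ + k))) := Real.exp_pos _
        have hstep := KEY (g k) (Real.exp (-(δ' * (Y₀ + k)))) ih1 hhk
        rw [Real.log_exp] at hstep
        constructor
        · rw [hgs]; linarith
        constructor
        · rw [hgs]
          have : Real.exp (-(δ' * (Y₀ + k))) = Real.exp (-(δ' * Y₀)) * a ^ k := by
            rw [ha, ← Real.exp_nat_mul, ← Real.exp_add]
            congr 1; ring
          rw [this]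
          have hqe : q * (1 - a) = Real.exp (-(δ' * Y₀)) :=
            div_mul_cancel₀ _ (by linarith : (1:ℝ) - a ≠ 0)
          have h7 : q * (1 - a^(k+1)) = q * (1 - a^k) + (q * (1 - a)) * a^k := by ring
          rw [hqe] at h7
          have hgoal : r₀ + q * (1 - a ^ k) + Real.exp (-(δ' * Y₀)) * a ^ k
              = r₀ + q * (1 - a ^ (k+1)) := by rw [h7]; ring
          rw [← hgoal]
          linarith
        · rw [hgs]
          push_cast
          set z := Y₀ + (k:ℝ) with hz
          have hzY : Y₀ ≤ z := by rw [hz]; linarith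
          have h1 : (1 + ε) * (z + Real.log c - δ' * z) ≤ (1 + ε) * (y (g k) + Real.log c - δ' * z) := by
            apply mul_le_mul_of_nonneg_left _ (by linarith)
            linarith
          have h2 : (1 + ε) * (z + Real.log c - δ' * z)
              = (1 + ε/2) * z + (1 + ε) * Real.log c := by
            have : (1 + ε) * (δ' * z) = (ε/2) * z := by
              rw [← mul_assoc, hδ'mul]
            nlinarith [this]
          have h3 := hY₀prop z hzY
          have h4 : z + 1 ≤ (1 + ε/2) * z + (1 + ε) * Real.log c := by nlinarith
          nlinarith
    -- derive the contradiction
    have hrinf : ∀ k : ℕ, g k ≤ r₀ + q := by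
      intro k
      obtain ⟨_, h2, _⟩ := IND k
      have : (0:ℝ) ≤ a ^ k := by positivity
      nlinarith
    have h1r₁ : (1:ℝ) ≤ r₁ := by rw [hr₁]; exact le_max_right _ _
    have hr₀1 : (1:ℝ) ≤ r₀ := le_trans h1r₁ hr₀r₁
    have hFinf : 0 < F (r₀ + q) := hFpos _ (by linarith)
    have htend : Tendsto (fun k : ℕ => Real.exp (-(Y₀ + k))) atTop (nhds 0) := by
      apply Real.tendsto_exp_atBot.comp
      apply tendsto_neg_atBot_iff.2
      exact tendsto_atTop_add_const_left _ _ tendsto_natCast_atTop_atTop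
    obtain ⟨k, hk⟩ := (htend.eventually (eventually_lt_nhds hFinf)).exists
    obtain ⟨hk1, _, hk3⟩ := IND k
    have hgk1 : (1:ℝ) ≤ g k := le_trans h1r₁ hk1
    have hFgk : F (g k) ≤ Real.exp (-(Y₀ + k)) := by
      have hFgkpos := hFpos _ hgk1
      calc F (g k) = Real.exp (Real.log (F (g k))) := (Real.exp_log hFgkpos).symm
        _ ≤ Real.exp (-(Y₀ + k)) := by
            apply Real.exp_le_exp.2
            have : Y₀ + (k:ℝ) ≤ -Real.log (F (g k)) := hk3
            linarith
    have hmono2 : F (r₀ + q) ≤ F (g k) := hFanti _ _ (hrinf k)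
    linarith
  -- assemble the limsup
  have hbdd : IsBoundedUnder (· ≤ ·) atTop f := by
    apply Filter.isBoundedUnder_of_eventually_le (a := -1 + (1/2 : ℝ))
    exact upperA (1/2) (by norm_num) (by norm_num)
  have hcobdd : IsCoboundedUnder (· ≤ ·) atTop f := by
    apply Filter.IsCoboundedUnder.of_frequently_ge (a := -1 - 1)
    exact lowerB 1 one_pos
  apply le_antisymm
  · apply le_of_forall_sub_le
    intro ε hε
    rw [sub_le_iff_le_add, show (-1:ℝ) + ε = -1 + ε by ring]
    have hε' : 0 < min ε (1/2) := lt_min hε (by norm_num)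
    calc Filter.limsup f atTop ≤ -1 + min ε (1/2) :=
          Filter.limsup_le_of_le hcobdd (upperA _ hε' (lt_of_le_of_lt (min_le_right _ _) (by norm_num)))
      _ ≤ -1 + ε := by
          have := min_le_left ε (1/2); linarith
  · apply le_of_forall_sub_le
    intro ε hε
    exact Filter.le_limsup_of_frequently_le (lowerB ε hε) hbdd
end

section
/- Let φ : [0,∞) → [0,∞) be an increasing, convex, non-constant function. Then limsup_{t→∞} ln(∫_t^∞ e^{-φ(r)} dr) / φ(t) ≥ -1. -/
/-!
A monotone `φ` with `φ → ∞` cannot satisfy `φ (s + e^{-ε φ s}) > (1 + ε) φ s` for all large `s`: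
iterating `s ↦ s + e^{-ε φ s}` would make `φ` grow geometrically along a sequence whose steps are
summable, hence bounded, contradicting monotonicity. At the infinitely many good points `s`,
integrating over `(s, s + e^{-ε φ s})` gives `∫_s^∞ e^{-φ} ≥ e^{-(1 + 2ε) φ s}`.
Convexity only enters through an affine lower bound `φ r ≥ a r + b` with `a > 0`, which gives
`φ → ∞` and the integrability of `e^{-φ}`.
-/

open MeasureTheory Filter Set

lemma exists_affine_le_of_convexOn_Ici {φ : ℝ → ℝ} (hmono : MonotoneOn φ (Ici 0))
    (hconv : ConvexOn ℝ (Ici 0) φ) (hnc : ∃ s t : ℝ, 0 ≤ s ∧ 0 ≤ t ∧ φ s ≠ φ t) :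
    ∃ a b : ℝ, 0 < a ∧ ∀ r, 0 ≤ r → a * r + b ≤ φ r := by
  obtain ⟨u, v, hu, huv, hφuv⟩ : ∃ u v : ℝ, 0 ≤ u ∧ u < v ∧ φ u < φ v := by
    obtain ⟨s, t, hs, ht, hne⟩ := hnc
    rcases lt_or_gt_of_ne (fun h : s = t => hne (h ▸ rfl)) with h | h
    · exact ⟨s, t, hs, h, (hmono hs ht h.le).lt_of_ne hne⟩
    · exact ⟨t, s, ht, h, (hmono ht hs h.le).lt_of_ne hne.symm⟩
  set m := slope φ u v with hm_def
  have hm : 0 < m := by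
    rw [hm_def, slope_def_field]; exact div_pos (sub_pos.2 hφuv) (sub_pos.2 huv)
  have hchord : ∀ r, v ≤ r → m * (r - u) + φ u ≤ φ r := by
    intro r hr
    have hur : u < r := huv.trans_le hr
    have hslope : m ≤ slope φ u r :=
      hconv.slope_mono hu ⟨mem_Ici.2 (hu.trans huv.le), huv.ne'⟩
        ⟨mem_Ici.2 (hu.trans hur.le), hur.ne'⟩ hr
    rw [slope_def_field, le_div_iff₀ (sub_pos.2 hur)] at hslope
    linarith
  refine ⟨m, min (φ 0 - m * v) (φ u - m * u), hm, fun r hr => ?_⟩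
  rcases le_total r v with h | h
  · have := hmono (mem_Ici.2 le_rfl) hr hr
    nlinarith [min_le_left (φ 0 - m * v) (φ u - m * u)]
  · nlinarith [min_le_right (φ 0 - m * v) (φ u - m * u), hchord r h]

lemma tendsto_atTop_of_affine_le {φ : ℝ → ℝ} {a b : ℝ} (ha : 0 < a)
    (h : ∀ r, 0 ≤ r → a * r + b ≤ φ r) : Tendsto φ atTop atTop :=
  tendsto_atTop_mono' _ ((eventually_ge_atTop 0).mono h)
    (tendsto_atTop_add_const_right _ b (tendsto_id.const_mul_atTop ha))

lemma integrableOn_exp_neg_Ioi_of_affine_le {φ : ℝ → ℝ} {a b : ℝ}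
    (hmono : MonotoneOn φ (Ici 0)) (ha : 0 < a) (h : ∀ r, 0 ≤ r → a * r + b ≤ φ r) :
    IntegrableOn (fun r => Real.exp (-φ r)) (Ioi 0) := by
  refine ((exp_neg_integrableOn_Ioi 0 ha).const_mul (Real.exp (-b))).mono' ?_ ?_
  · exact (Real.continuous_exp.measurable.comp_aemeasurable
      (aemeasurable_restrict_of_monotoneOn measurableSet_Ioi
        (hmono.mono Ioi_subset_Ici_self)).neg).aestronglyMeasurable
  · filter_upwards [ae_restrict_mem measurableSet_Ioi] with r hr
    rw [Real.norm_of_nonneg (Real.exp_pos _).le, ← Real.exp_add]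
    exact Real.exp_le_exp.2 (by linarith [h r (le_of_lt hr)])

lemma mul_exp_neg_le_integral_Ioi {φ : ℝ → ℝ} (hmono : MonotoneOn φ (Ici 0))
    (hint : IntegrableOn (fun r => Real.exp (-φ r)) (Ioi 0)) {s δ : ℝ} (hs : 0 ≤ s)
    (hδ : 0 ≤ δ) : δ * Real.exp (-φ (s + δ)) ≤ ∫ r in Ioi s, Real.exp (-φ r) := by
  have hint_s := hint.mono_set (Ioi_subset_Ioi hs)
  calc δ * Real.exp (-φ (s + δ))
      = Real.exp (-φ (s + δ)) * volume.real (Ioc s (s + δ)) := by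
        rw [Real.volume_real_Ioc_of_le (by linarith)]; ring
    _ ≤ ∫ r in Ioc s (s + δ), Real.exp (-φ r) :=
        setIntegral_ge_of_const_le_real measurableSet_Ioc measure_Ioc_lt_top.ne
          (fun r hr => Real.exp_le_exp.2 <| neg_le_neg <|
            hmono (hs.trans hr.1.le) (by simp only [mem_Ici]; linarith [hr.1]) hr.2)
          (hint_s.mono_set Ioc_subset_Ioi_self)
    _ ≤ ∫ r in Ioi s, Real.exp (-φ r) :=
        setIntegral_mono_set hint_s (Eventually.of_forall fun _ => (Real.exp_pos _).le)
          (Eventually.of_forall Ioc_subset_Ioi_self)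

lemma exp_neg_mul_le_geometric {ε y : ℝ} (hε : 0 < ε) {n : ℕ} (hy : (1 + ε) ^ n ≤ y) :
    Real.exp (-(ε * y)) ≤ Real.exp (-ε) * Real.exp (-ε ^ 2) ^ n := by
  rw [← Real.exp_nat_mul, ← Real.exp_add]
  have hbern := one_add_mul_le_pow (by linarith : (-2 : ℝ) ≤ ε) n
  exact Real.exp_le_exp.2 (by nlinarith)

lemma frequently_apply_add_exp_neg_mul_le {φ : ℝ → ℝ} (hmono : MonotoneOn φ (Ici 0))
    (htend : Tendsto φ atTop atTop) {ε : ℝ} (hε : 0 < ε) :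
    ∃ᶠ s in atTop, φ (s + Real.exp (-(ε * φ s))) ≤ (1 + ε) * φ s := by
  intro hgrow
  simp only [not_le] at hgrow
  obtain ⟨T, hT⟩ := ((hgrow.and (htend.eventually_ge_atTop 1)).and
    (eventually_ge_atTop 0)).exists_forall_of_atTop
  set q := Real.exp (-ε ^ 2)
  have hq : q < 1 := Real.exp_lt_one_iff.2 (by nlinarith)
  -- `a` bounds the sum of the geometric majorants `e^{-ε} q^n` of the steps
  set a := Real.exp (-ε) / (1 - q)
  have ha : a * (1 - q) = Real.exp (-ε) := div_mul_cancel₀ _ (by linarith)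
  set x : ℕ → ℝ := fun n => (fun y => y + Real.exp (-(ε * φ y)))^[n] T
  have hx_succ : ∀ n, x (n + 1) = x n + Real.exp (-(ε * φ (x n))) := fun n =>
    Function.iterate_succ_apply' _ n T
  have hx : ∀ n, T ≤ x n ∧ (1 + ε) ^ n ≤ φ (x n) ∧ x n + a * q ^ n ≤ T + a := by
    intro n
    induction n with
    | zero => simpa [x] using (hT T le_rfl).1.2
    | succ n ih =>
      obtain ⟨hTx, hpow, hbound⟩ := ih
      have hgrow_n := (hT (x n) hTx).1.1
      have hstep := exp_neg_mul_le_geometric hε hpow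
      have hqn : 0 ≤ q ^ n := pow_nonneg (Real.exp_pos _).le n
      rw [hx_succ]
      refine ⟨by linarith [Real.exp_pos (-(ε * φ (x n)))], ?_, ?_⟩
      · rw [pow_succ, mul_comm]
        exact (mul_le_mul_of_nonneg_left hpow (by linarith)).trans hgrow_n.le
      · rw [pow_succ]
        nlinarith
  obtain ⟨n, hn⟩ := pow_unbounded_of_one_lt (φ (T + a)) (lt_add_of_pos_right 1 hε)
  obtain ⟨hTx, hpow, hbound⟩ := hx n
  have haq : 0 ≤ a * q ^ n :=
    mul_nonneg (div_nonneg (Real.exp_pos _).le (by linarith)) (pow_nonneg (Real.exp_pos _).le n)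
  have hT0 := (hT T le_rfl).2
  have := hmono (hT0.trans hTx) (by simp only [mem_Ici]; linarith) (by linarith : x n ≤ T + a)
  linarith

lemma frequently_neg_le_log_integral_div {φ : ℝ → ℝ} (hmono : MonotoneOn φ (Ici 0))
    (htend : Tendsto φ atTop atTop) (hint : IntegrableOn (fun r => Real.exp (-φ r)) (Ioi 0))
    {ε : ℝ} (hε : 0 < ε) :
    ∃ᶠ t in atTop, -(1 + 2 * ε) ≤ Real.log (∫ r in Ioi t, Real.exp (-φ r)) / φ t := by
  refine ((frequently_apply_add_exp_neg_mul_le hmono htend hε).and_eventually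
    ((eventually_ge_atTop 0).and (htend.eventually_gt_atTop 0))).mono ?_
  rintro s ⟨hshift, hs, hφs⟩
  set δ := Real.exp (-(ε * φ s))
  have hlow := mul_exp_neg_le_integral_Ioi hmono hint hs (Real.exp_pos (-(ε * φ s))).le
  have hlog : -(ε * φ s) - φ (s + δ) ≤ Real.log (∫ r in Ioi s, Real.exp (-φ r)) :=
    calc -(ε * φ s) - φ (s + δ) = Real.log (δ * Real.exp (-φ (s + δ))) := by
          rw [Real.log_mul (Real.exp_pos _).ne' (Real.exp_pos _).ne', Real.log_exp,
            Real.log_exp]; ring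
      _ ≤ _ := Real.log_le_log (by positivity) hlow
  rw [le_div_iff₀ hφs]
  linarith

lemma isBoundedUnder_le_log_integral_div {φ : ℝ → ℝ} (htend : Tendsto φ atTop atTop)
    (hint : IntegrableOn (fun r => Real.exp (-φ r)) (Ioi 0)) :
    IsBoundedUnder (· ≤ ·) atTop
      (fun t => Real.log (∫ r in Ioi t, Real.exp (-φ r)) / φ t) := by
  set I₀ := ∫ r in Ioi 0, Real.exp (-φ r)
  refine isBoundedUnder_of_eventually_le (a := I₀) ?_
  filter_upwards [eventually_ge_atTop 0, htend.eventually_ge_atTop 1] with t ht hφt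
  have hI : 0 ≤ ∫ r in Ioi t, Real.exp (-φ r) :=
    setIntegral_nonneg measurableSet_Ioi fun _ _ => (Real.exp_pos _).le
  have hIt : ∫ r in Ioi t, Real.exp (-φ r) ≤ I₀ :=
    setIntegral_mono_set hint (Eventually.of_forall fun _ => (Real.exp_pos _).le)
      (Eventually.of_forall (Ioi_subset_Ioi ht))
  calc Real.log (∫ r in Ioi t, Real.exp (-φ r)) / φ t ≤ I₀ / φ t :=
        div_le_div_of_nonneg_right ((Real.log_le_self hI).trans hIt) (by linarith)
    _ ≤ I₀ := div_le_self (hI.trans hIt) hφt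

theorem le_limsup_log_integral_exp_neg_div {φ : ℝ → ℝ} (hmono : MonotoneOn φ (Ici 0))
    (htend : Tendsto φ atTop atTop) (hint : IntegrableOn (fun r => Real.exp (-φ r)) (Ioi 0)) :
    -1 ≤ limsup (fun t => Real.log (∫ r in Ioi t, Real.exp (-φ r)) / φ t) atTop := by
  refine le_of_forall_pos_le_add fun ε hε => ?_
  have := le_limsup_of_frequently_le
    (frequently_neg_le_log_integral_div hmono htend hint (half_pos hε))
    (isBoundedUnder_le_log_integral_div htend hint)
  linarith

theorem stmt2_general (φ : ℝ → ℝ)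
    (hmono : MonotoneOn φ (Set.Ici 0))
    (hconv : ConvexOn ℝ (Set.Ici 0) φ)
    (hnc : ∃ s t : ℝ, 0 ≤ s ∧ 0 ≤ t ∧ φ s ≠ φ t) :
    -1 ≤ Filter.limsup
      (fun t => Real.log (∫ r in Set.Ioi t, Real.exp (-φ r)) / φ t)
      Filter.atTop := by
  obtain ⟨a, b, ha, haff⟩ := exists_affine_le_of_convexOn_Ici hmono hconv hnc
  exact le_limsup_log_integral_exp_neg_div hmono (tendsto_atTop_of_affine_le ha haff)
    (integrableOn_exp_neg_Ioi_of_affine_le hmono ha haff)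

theorem stmt2 (φ : ℝ → ℝ)
    (hmono : MonotoneOn φ (Set.Ici 0))
    (hconv : ConvexOn ℝ (Set.Ici 0) φ)
    (hnonneg : ∀ t ∈ Set.Ici (0 : ℝ), 0 ≤ φ t)
    (hnc : ∃ s t : ℝ, 0 ≤ s ∧ 0 ≤ t ∧ φ s ≠ φ t) :
    -1 ≤ Filter.limsup
      (fun t => Real.log (∫ r in Set.Ioi t, Real.exp (-φ r)) / φ t)
      Filter.atTop :=
  stmt2_general φ hmono hconv hnc
end

section
/- Let φ : [0,∞) → [0,∞) be an increasing, convex, non-constant function and let α > 1. Then the set E = { t ≥ 0 : ln(∫_t^∞ e^{-φ(r)} dr) < -α·φ(t) } has finite Lebesgue measure. -/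
/-!
If `t` lies in the set, the tail integral `∫_t^∞ e^{-φ}` is below `e^{-α φ(t)}`. Since `φ` is
increasing, the tail integral is at least `(t' - t) e^{-φ(t) - 1}` for every `t' > t` with
`φ(t') ≤ φ(t) + 1`, so the points of the set on which `φ` lies in `[n, n + 1)` form a set of
diameter at most `e^{1 - (α - 1) n}`. These bounds are summable because `α > 1`.
-/

open MeasureTheory Filter Set Real

lemma Real.volume_le_ofReal_of_forall_sub_le {s : Set ℝ} {d : ℝ}
    (h : ∀ x ∈ s, ∀ y ∈ s, y - x ≤ d) : volume s ≤ ENNReal.ofReal d :=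
  (Real.volume_le_diam s).trans <| Metric.ediam_le fun x hx y hy => by
    rw [edist_dist, Real.dist_eq]
    exact ENNReal.ofReal_le_ofReal (abs_sub_le_iff.2 ⟨h y hy x hx, h x hx y hy⟩)

lemma measure_iUnion_lt_top_of_le_ofReal {α ι : Type*} [MeasurableSpace α] [Countable ι]
    {μ : Measure α} {s : ι → Set α} {a : ι → ℝ} (ha : Summable a)
    (hs : ∀ i, μ (s i) ≤ ENNReal.ofReal (a i)) : μ (⋃ i, s i) < ⊤ :=
  (measure_iUnion_le s).trans_lt <|
    (ENNReal.tsum_le_tsum hs).trans_lt ha.tsum_ofReal_ne_top.lt_top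

lemma Real.pos_and_lt_exp_of_log_lt {x c : ℝ} (hx : 0 ≤ x) (hc : c ≤ 0) (h : log x < c) :
    0 < x ∧ x < exp c := by
  have hx0 : 0 < x := hx.lt_of_ne <| by
    rintro rfl
    rw [log_zero] at h
    linarith
  exact ⟨hx0, (log_lt_iff_lt_exp hx0).1 h⟩

/-- A non-integrable tail has integral `0` and `log 0 = 0`, so a negative bound on the logarithm
forces integrability, just as it would exclude an infinite integral. -/
lemma integrableOn_Ioi_and_integral_lt_exp_of_log_lt {φ : ℝ → ℝ} {t c : ℝ} (hc : c ≤ 0)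
    (h : log (∫ r in Ioi t, exp (-φ r)) < c) :
    IntegrableOn (fun r => exp (-φ r)) (Ioi t) ∧ ∫ r in Ioi t, exp (-φ r) < exp c := by
  obtain ⟨hpos, hlt⟩ := Real.pos_and_lt_exp_of_log_lt
    (setIntegral_nonneg measurableSet_Ioi fun r _ => (exp_pos _).le) hc h
  exact ⟨Integrable.of_integral_ne_zero hpos.ne', hlt⟩

lemma sub_lt_exp_add_of_integral_Ioi_lt {φ : ℝ → ℝ} {t t' c : ℝ}
    (hmono : MonotoneOn φ (Icc t t')) (hint : IntegrableOn (fun r => exp (-φ r)) (Ioi t))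
    (h : ∫ r in Ioi t, exp (-φ r) < exp c) : t' - t < exp (c + φ t') := by
  rcases le_or_gt t' t with htt' | htt'
  · linarith [exp_pos (c + φ t')]
  have hlower : (t' - t) * exp (-φ t') ≤ ∫ r in Ioc t t', exp (-φ r) :=
    calc (t' - t) * exp (-φ t') = ∫ _ in Ioc t t', exp (-φ t') := by
          rw [setIntegral_const, Real.volume_real_Ioc_of_le htt'.le, smul_eq_mul]
      _ ≤ ∫ r in Ioc t t', exp (-φ r) :=
          setIntegral_mono_on (integrableOn_const measure_Ioc_lt_top.ne)
            (hint.mono_set Ioc_subset_Ioi_self) measurableSet_Ioc fun r hr =>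
            exp_le_exp.2 <| neg_le_neg <|
              hmono (Ioc_subset_Icc_self hr) (right_mem_Icc.2 htt'.le) hr.2
  have hupper : ∫ r in Ioc t t', exp (-φ r) ≤ ∫ r in Ioi t, exp (-φ r) :=
    setIntegral_mono_set hint (Eventually.of_forall fun r => (exp_pos _).le)
      Ioc_subset_Ioi_self.eventuallyLE
  calc t' - t = (t' - t) * exp (-φ t') * exp (φ t') := by
        rw [mul_assoc, ← exp_add, neg_add_cancel, exp_zero, mul_one]
    _ < exp c * exp (φ t') := by gcongr; linarith
    _ = exp (c + φ t') := (exp_add _ _).symm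

lemma sub_lt_of_log_integral_Ioi_lt {φ : ℝ → ℝ} {α t t' : ℝ} (hmono : MonotoneOn φ (Ici t))
    (hα : 0 ≤ α) (hφt : 0 ≤ φ t) (ht : log (∫ r in Ioi t, exp (-φ r)) < -α * φ t)
    (ht' : φ t' ≤ φ t + 1) : t' - t < exp (1 + (1 - α) * φ t) := by
  obtain ⟨hint, hlt⟩ :=
    integrableOn_Ioi_and_integral_lt_exp_of_log_lt (by nlinarith) ht
  calc t' - t < exp (-α * φ t + φ t') :=
        sub_lt_exp_add_of_integral_Ioi_lt (hmono.mono Icc_subset_Ici_self) hint hlt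
    _ ≤ exp (1 + (1 - α) * φ t) := exp_le_exp.2 (by linarith)

theorem stmt3_general (φ : ℝ → ℝ)
    (hmono : MonotoneOn φ (Set.Ici 0))
    (hnonneg : ∀ t ∈ Set.Ici (0 : ℝ), 0 ≤ φ t)
    (α : ℝ) (hα : 1 < α) :
    volume {t : ℝ | 0 ≤ t ∧ Real.log (∫ r in Set.Ioi t, Real.exp (-φ r)) < -α * φ t} < ⊤ := by
  set E := {t : ℝ | 0 ≤ t ∧ Real.log (∫ r in Set.Ioi t, Real.exp (-φ r)) < -α * φ t}
  have hcover : E ⊆ ⋃ n : ℕ, E ∩ φ ⁻¹' Ico (n : ℝ) (n + 1) := fun t ht =>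
    mem_iUnion.2 ⟨⌊φ t⌋₊, ht, Nat.floor_le (hnonneg t ht.1), Nat.lt_floor_add_one _⟩
  have hsummable : Summable fun n : ℕ => exp 1 * exp (n * (1 - α)) :=
    (summable_exp_nat_mul_iff.2 (by linarith)).mul_left _
  refine (measure_mono hcover).trans_lt <|
    measure_iUnion_lt_top_of_le_ofReal hsummable fun n => ?_
  refine Real.volume_le_ofReal_of_forall_sub_le ?_
  rintro t ⟨⟨ht0, ht⟩, hnt, -⟩ t' ⟨-, -, ht'n⟩
  calc t' - t ≤ exp (1 + (1 - α) * φ t) :=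
        (sub_lt_of_log_integral_Ioi_lt (hmono.mono (Ici_subset_Ici.2 ht0)) (by linarith)
          (hnonneg t ht0) ht (by linarith)).le
    _ ≤ exp 1 * exp (n * (1 - α)) := by
        rw [← exp_add]
        exact exp_le_exp.2 (by nlinarith)

theorem stmt3 (φ : ℝ → ℝ)
    (hmono : MonotoneOn φ (Set.Ici 0))
    (hconv : ConvexOn ℝ (Set.Ici 0) φ)
    (hnonneg : ∀ t ∈ Set.Ici (0 : ℝ), 0 ≤ φ t)
    (hnc : ∃ s t : ℝ, 0 ≤ s ∧ 0 ≤ t ∧ φ s ≠ φ t)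
    (α : ℝ) (hα : 1 < α) :
    volume {t : ℝ | 0 ≤ t ∧ Real.log (∫ r in Set.Ioi t, Real.exp (-φ r)) < -α * φ t} < ⊤ :=
  stmt3_general φ hmono hnonneg α hα
end

section
/- There exists an increasing, convex, differentiable function φ : [0,∞) → [0,∞) with φ(0) ≥ 1, and a strictly increasing sequence (t_k) of positive reals with t_k → ∞, such that φ'(t_k) > e^{φ(t_k)} for every k. -/
/-!
Take `φ t = 1 + ∑ₖ q (Vₖ (t - k))` with `q x = (max x 0)² / 2`. Every summand is a convex `C¹`
function vanishing on `(-∞, k]`, so on `(-∞, N)` the sum is finite and `φ` is convex, increasing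
and differentiable. At `tₖ = k + 1 / Vₖ` the `k`-th summand adds only `1 / 2` to `φ` but `Vₖ` to
`φ'`, while the earlier summands are bounded on `[0, k + 1]` in terms of `V₀, …, V_{k-1}` alone.
Choosing `Vₖ` recursively larger than the exponential of that bound gives `φ'(tₖ) > e^{φ(tₖ)}`.
-/

open Filter Set Topology Real

section VanishingLeft

variable {f f' : ℕ → ℝ → ℝ}

lemma tsum_eq_sum_range_of_vanishing (hf : ∀ (k : ℕ), ∀ t ≤ (k : ℝ), f k t = 0) {N : ℕ} {t : ℝ}
    (ht : t < N) : ∑' k, f k t = ∑ k ∈ Finset.range N, f k t :=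
  tsum_eq_sum fun k hk =>
    hf k t (ht.le.trans (Nat.cast_le.2 (not_lt.1 (Finset.mem_range.not.1 hk))))

lemma monotone_tsum_of_vanishing (hf : ∀ (k : ℕ), ∀ t ≤ (k : ℝ), f k t = 0)
    (hmono : ∀ k, Monotone (f k)) : Monotone fun t => ∑' k, f k t := by
  intro a b hab
  obtain ⟨N, hN⟩ := exists_nat_gt b
  simp only [tsum_eq_sum_range_of_vanishing hf (hab.trans_lt hN),
    tsum_eq_sum_range_of_vanishing hf hN]
  exact Finset.sum_le_sum fun k _ => hmono k hab

lemma hasDerivAt_tsum_of_vanishing (hf : ∀ (k : ℕ), ∀ t ≤ (k : ℝ), f k t = 0)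
    (hf' : ∀ (k : ℕ), ∀ t ≤ (k : ℝ), f' k t = 0) (hderiv : ∀ k t, HasDerivAt (f k) (f' k t) t)
    (t : ℝ) : HasDerivAt (fun t => ∑' k, f k t) (∑' k, f' k t) t := by
  obtain ⟨N, hN⟩ := exists_nat_gt t
  have hfin : (fun s => ∑' k, f k s) =ᶠ[𝓝 t] fun s => ∑ k ∈ Finset.range N, f k s := by
    filter_upwards [Iio_mem_nhds hN] with s hs
    exact tsum_eq_sum_range_of_vanishing hf hs
  rw [tsum_eq_sum_range_of_vanishing hf' hN]
  exact (HasDerivAt.fun_sum fun k _ => hderiv k t).congr_of_eventuallyEq hfin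

end VanishingLeft

noncomputable def halfSqPosPart (x : ℝ) : ℝ := max x 0 ^ 2 / 2

lemma halfSqPosPart_of_nonpos {x : ℝ} (hx : x ≤ 0) : halfSqPosPart x = 0 := by
  simp [halfSqPosPart, max_eq_right hx]

lemma halfSqPosPart_of_nonneg {x : ℝ} (hx : 0 ≤ x) : halfSqPosPart x = x ^ 2 / 2 := by
  simp [halfSqPosPart, max_eq_left hx]

lemma halfSqPosPart_nonneg (x : ℝ) : 0 ≤ halfSqPosPart x := by
  unfold halfSqPosPart; positivity

lemma monotone_halfSqPosPart : Monotone halfSqPosPart := fun x y hxy => by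
  unfold halfSqPosPart; gcongr

lemma hasDerivAt_halfSqPosPart (x : ℝ) : HasDerivAt halfSqPosPart (max x 0) x := by
  refine hasDerivAt_of_hasDerivAt_of_ne' (f := halfSqPosPart) (x := 0) (g := fun x => max x 0)
    (fun y hy => ?_) (by unfold halfSqPosPart; fun_prop) (by fun_prop) x
  rcases hy.lt_or_gt with hy | hy
  · have hzero : halfSqPosPart =ᶠ[𝓝 y] fun _ => 0 := by
      filter_upwards [Iio_mem_nhds hy] with z hz
      exact halfSqPosPart_of_nonpos hz.le
    simpa [max_eq_right hy.le] using (hasDerivAt_const y (0 : ℝ)).congr_of_eventuallyEq hzero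
  · have hsq : halfSqPosPart =ᶠ[𝓝 y] fun z => z ^ 2 / 2 := by
      filter_upwards [Ioi_mem_nhds hy] with z hz
      exact halfSqPosPart_of_nonneg hz.le
    simpa [max_eq_left hy.le] using
      ((hasDerivAt_pow 2 y).div_const 2).congr_of_eventuallyEq hsq

section RampSum

variable {V : ℕ → ℝ}

noncomputable def rampSum (V : ℕ → ℝ) (t : ℝ) : ℝ :=
  1 + ∑' k, halfSqPosPart (V k * (t - k))

noncomputable def rampSlope (V : ℕ → ℝ) (t : ℝ) : ℝ :=
  ∑' k, V k * max (V k * (t - k)) 0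

noncomputable def rampPoint (V : ℕ → ℝ) (k : ℕ) : ℝ := k + (V k)⁻¹

lemma mul_sub_natCast_nonpos (hV : ∀ k, 0 ≤ V k) {k : ℕ} {t : ℝ} (ht : t ≤ k) :
    V k * (t - k) ≤ 0 :=
  mul_nonpos_of_nonneg_of_nonpos (hV k) (sub_nonpos.2 ht)

lemma halfSqPosPart_mul_sub_natCast_of_le (hV : ∀ k, 0 ≤ V k) :
    ∀ (k : ℕ), ∀ t ≤ (k : ℝ), halfSqPosPart (V k * (t - k)) = 0 :=
  fun _ _ ht => halfSqPosPart_of_nonpos (mul_sub_natCast_nonpos hV ht)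

lemma mul_max_mul_sub_natCast_of_le (hV : ∀ k, 0 ≤ V k) :
    ∀ (k : ℕ), ∀ t ≤ (k : ℝ), V k * max (V k * (t - k)) 0 = 0 :=
  fun _ _ ht => by rw [max_eq_right (mul_sub_natCast_nonpos hV ht), mul_zero]

lemma hasDerivAt_rampSum (hV : ∀ k, 0 ≤ V k) (t : ℝ) :
    HasDerivAt (rampSum V) (rampSlope V t) t := by
  refine (hasDerivAt_tsum_of_vanishing (halfSqPosPart_mul_sub_natCast_of_le hV)
    (mul_max_mul_sub_natCast_of_le hV) (fun k t => ?_) t).const_add 1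
  have hlin : HasDerivAt (fun t : ℝ => V k * (t - k)) (V k) t := by
    simpa using ((hasDerivAt_id t).sub_const (k : ℝ)).const_mul (V k)
  exact ((hasDerivAt_halfSqPosPart _).comp t hlin).congr_deriv (mul_comm _ _)

lemma monotone_rampSum (hV : ∀ k, 0 ≤ V k) : Monotone (rampSum V) :=
  monotone_const.add <| monotone_tsum_of_vanishing (halfSqPosPart_mul_sub_natCast_of_le hV)
    fun k => monotone_halfSqPosPart.comp fun a b hab => by gcongr; exact hV k

lemma monotone_rampSlope (hV : ∀ k, 0 ≤ V k) : Monotone (rampSlope V) :=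
  monotone_tsum_of_vanishing (mul_max_mul_sub_natCast_of_le hV)
    fun k a b hab => by gcongr <;> exact hV k

lemma convexOn_rampSum (hV : ∀ k, 0 ≤ V k) : ConvexOn ℝ univ (rampSum V) := by
  have hderiv : deriv (rampSum V) = rampSlope V := funext fun t => (hasDerivAt_rampSum hV t).deriv
  exact Monotone.convexOn_univ_of_deriv (fun t => (hasDerivAt_rampSum hV t).differentiableAt)
    (hderiv ▸ monotone_rampSlope hV)

lemma one_le_rampSum (t : ℝ) : 1 ≤ rampSum V t :=
  le_add_of_nonneg_right (tsum_nonneg fun _ => halfSqPosPart_nonneg _)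

lemma natCast_lt_rampPoint {k : ℕ} (hVk : 1 < V k) : (k : ℝ) < rampPoint V k :=
  lt_add_of_pos_right _ (inv_pos.2 (zero_lt_one.trans hVk))

lemma rampPoint_lt_natCast_succ {k : ℕ} (hVk : 1 < V k) : rampPoint V k < (k + 1 : ℕ) := by
  rw [rampPoint]; push_cast; linarith [inv_lt_one_of_one_lt₀ hVk]

lemma mul_rampPoint_sub {k : ℕ} (hVk : 1 < V k) : V k * (rampPoint V k - k) = 1 := by
  rw [rampPoint, add_sub_cancel_left, mul_inv_cancel₀ (zero_lt_one.trans hVk).ne']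

lemma le_rampSlope_rampPoint {k : ℕ} (hVk : 1 < V k) (hV : ∀ j, 0 ≤ V j) :
    V k ≤ rampSlope V (rampPoint V k) := by
  rw [rampSlope, tsum_eq_sum_range_of_vanishing (mul_max_mul_sub_natCast_of_le hV)
    (rampPoint_lt_natCast_succ hVk)]
  calc V k = V k * max (V k * (rampPoint V k - k)) 0 := by
        rw [mul_rampPoint_sub hVk, max_eq_left zero_le_one, mul_one]
    _ ≤ _ := Finset.single_le_sum (f := fun j => V j * max (V j * (rampPoint V k - j)) 0)
        (fun j _ => mul_nonneg (hV j) (le_max_right _ _))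
        (Finset.self_mem_range_succ k)

lemma rampSum_rampPoint_le {k : ℕ} (hVk : 1 < V k) (hV : ∀ j, 0 ≤ V j) :
    rampSum V (rampPoint V k) ≤ 3 / 2 + (k + 1) ^ 2 / 2 * ∑ j ∈ Finset.range k, V j ^ 2 := by
  have hearlier : ∀ j ∈ Finset.range k,
      halfSqPosPart (V j * (rampPoint V k - j)) ≤ (k + 1) ^ 2 / 2 * V j ^ 2 := by
    intro j _
    have hle : V j * (rampPoint V k - j) ≤ V j * (k + 1) := by
      gcongr
      · exact hV j
      · have := rampPoint_lt_natCast_succ hVk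
        push_cast at this
        linarith [(Nat.cast_nonneg j : (0 : ℝ) ≤ j)]
    calc halfSqPosPart (V j * (rampPoint V k - j))
        ≤ halfSqPosPart (V j * (k + 1)) := monotone_halfSqPosPart hle
      _ = (k + 1) ^ 2 / 2 * V j ^ 2 := by
        rw [halfSqPosPart_of_nonneg (by have := hV j; positivity)]; ring
  rw [rampSum, tsum_eq_sum_range_of_vanishing (halfSqPosPart_mul_sub_natCast_of_le hV)
      (rampPoint_lt_natCast_succ hVk),
    Finset.sum_range_succ, mul_rampPoint_sub hVk, halfSqPosPart_of_nonneg zero_le_one,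
    Finset.mul_sum]
  linarith [Finset.sum_le_sum hearlier]

lemma strictMono_rampPoint (hV : ∀ k, 1 < V k) : StrictMono (rampPoint V) :=
  strictMono_nat_of_lt_succ fun k =>
    (rampPoint_lt_natCast_succ (hV k)).trans (natCast_lt_rampPoint (hV (k + 1)))

lemma tendsto_rampPoint_atTop (hV : ∀ k, 1 < V k) : Tendsto (rampPoint V) atTop atTop :=
  tendsto_atTop_mono (fun k => (natCast_lt_rampPoint (hV k)).le) tendsto_natCast_atTop_atTop

end RampSum

noncomputable def slopeSqSum : ℕ → ℝ
  | 0 => 0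
  | k + 1 => slopeSqSum k + rexp (2 + (k + 1) ^ 2 * slopeSqSum k) ^ 2

/-- `Vₖ = exp (2 + (k + 1)² ∑_{j<k} Vⱼ²)`: the exponent beats the bound `rampSum_rampPoint_le`. -/
noncomputable def fastSlope (k : ℕ) : ℝ := rexp (2 + (k + 1) ^ 2 * slopeSqSum k)

lemma slopeSqSum_eq_sum (k : ℕ) : slopeSqSum k = ∑ j ∈ Finset.range k, fastSlope j ^ 2 := by
  induction k with
  | zero => rfl
  | succ k ih => rw [slopeSqSum, Finset.sum_range_succ, ← ih, fastSlope]

lemma one_lt_fastSlope (k : ℕ) : 1 < fastSlope k := by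
  have : 0 ≤ slopeSqSum k := by rw [slopeSqSum_eq_sum]; positivity
  exact one_lt_exp_iff.2 (by positivity)

lemma exp_rampSum_fastSlope_lt (k : ℕ) :
    rexp (rampSum fastSlope (rampPoint fastSlope k)) < fastSlope k := by
  have hV : ∀ k, 0 ≤ fastSlope k := fun k => (exp_pos _).le
  have hbound := rampSum_rampPoint_le (one_lt_fastSlope k) hV
  have hS : 0 ≤ (k + 1 : ℝ) ^ 2 * slopeSqSum k := by
    rw [slopeSqSum_eq_sum]; positivity
  rw [← slopeSqSum_eq_sum] at hbound
  exact exp_lt_exp.2 (by linarith)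

theorem stmt4 :
    ∃ φ : ℝ → ℝ,
      MonotoneOn φ (Set.Ici 0) ∧
      ConvexOn ℝ (Set.Ici 0) φ ∧
      DifferentiableOn ℝ φ (Set.Ici 0) ∧
      (∀ t ∈ Set.Ici (0 : ℝ), 0 ≤ φ t) ∧
      1 ≤ φ 0 ∧
      ∃ t : ℕ → ℝ,
        StrictMono t ∧ (∀ k, 0 < t k) ∧ Filter.Tendsto t Filter.atTop Filter.atTop ∧
        ∀ k, Real.exp (φ (t k)) < derivWithin φ (Set.Ici 0) (t k) := by
  have hV : ∀ k, 0 ≤ fastSlope k := fun k => (exp_pos _).le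
  have hpos : ∀ k, 0 < rampPoint fastSlope k := fun k =>
    (Nat.cast_nonneg k).trans_lt (natCast_lt_rampPoint (one_lt_fastSlope k))
  refine ⟨rampSum fastSlope, (monotone_rampSum hV).monotoneOn _,
    (convexOn_rampSum hV).subset (subset_univ _) (convex_Ici 0),
    fun t _ => (hasDerivAt_rampSum hV t).differentiableAt.differentiableWithinAt,
    fun t _ => zero_le_one.trans (one_le_rampSum t), one_le_rampSum 0,
    rampPoint fastSlope, strictMono_rampPoint one_lt_fastSlope, hpos,
    tendsto_rampPoint_atTop one_lt_fastSlope, fun k => ?_⟩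
  rw [(hasDerivAt_rampSum hV _).hasDerivWithinAt.derivWithin
    (uniqueDiffOn_Ici 0 _ (hpos k).le)]
  exact (exp_rampSum_fastSlope_lt k).trans_le (le_rampSlope_rampPoint (one_lt_fastSlope k) hV)
end

section
/- Let n ≥ 2, let φ : [0,∞) → [0,∞) be an increasing, convex, non-constant function, and let μ be the probability measure on ℝⁿ with density x ↦ e^{-φ(|x|)}. Let K ⊂ ℝⁿ be a convex symmetric body and let r(K, B₂ⁿ) = max{R > 0 : R·B₂ⁿ ⊆ K}. Then limsup_{t→∞} ln(μ((tK)^c)) / φ(r(K, B₂ⁿ)·t) = -1. -/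
/-
Upper bound: `tK` contains the ball of radius `r t`, and on `{‖x‖ ≥ r t}` one can split
`e^{-φ ‖x‖} ≤ e^{-δ φ (r t)} e^{-(1 - δ) φ ‖x‖}` for `0 ≤ δ < 1`; the last factor is integrable
because a monotone, convex, non-constant `φ` grows at least linearly. Hence
`μ((tK)ᶜ) ≤ C e^{-δ φ (r t)}`.

Lower bound: a point of norm `r` outside the interior of `K` carries a supporting hyperplane
`⟪θ, ·⟫ = r`, so the ball of radius `ρ` centred at `(r t + ρ) θ` misses `tK` and has
`μ`-measure at least `e^{-φ (r t + 2ρ)} ρⁿ |B|`. Taking `ρ` of order `e^{-c φ (r t)}` gives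
`μ((tK)ᶜ) ≥ C e^{-δ φ (r t)}` for any `δ > 1` at all `t` with `φ (s + e^{-c φ s}) ≤ κ φ s`,
where `s = r t` and `κ > 1` is fixed. Such `s` are unbounded: otherwise iterating
`s ↦ s + e^{-c φ s}` gives a sequence whose increments are summable (as `φ` grows geometrically
along it) but on which `φ` is unbounded, contradicting monotonicity.
-/

open MeasureTheory Filter Set Pointwise

open Metric Real Module InnerProductSpace

theorem exists_pos_mul_sub_le_of_convexOn {φ : ℝ → ℝ} (hmono : MonotoneOn φ (Ici 0))
    (hconv : ConvexOn ℝ (Ici 0) φ) (hnc : ∃ s t : ℝ, 0 ≤ s ∧ 0 ≤ t ∧ φ s ≠ φ t) :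
    ∃ a B : ℝ, 0 < a ∧ ∀ s, 0 ≤ s → a * s - B ≤ φ s := by
  obtain ⟨u, v, hu, hv, huv, hlt⟩ : ∃ u v : ℝ, 0 ≤ u ∧ 0 ≤ v ∧ u < v ∧ φ u < φ v := by
    obtain ⟨s, t, hs, ht, hne⟩ := hnc
    rcases lt_or_gt_of_ne (ne_of_apply_ne φ hne) with h | h
    · exact ⟨s, t, hs, ht, h, (hmono hs ht h.le).lt_of_ne hne⟩
    · exact ⟨t, s, ht, hs, h, (hmono ht hs h.le).lt_of_ne hne.symm⟩
  set a := (φ v - φ u) / (v - u)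
  have hφ0 : ∀ s, 0 ≤ s → φ 0 ≤ φ s := fun s hs => hmono (mem_Ici.2 le_rfl) hs hs
  have ha : 0 < a := div_pos (sub_pos.2 hlt) (sub_pos.2 huv)
  refine ⟨a, a * v - φ 0, ha, fun s hs => ?_⟩
  rcases le_or_gt s v with hsv | hvs
  · nlinarith [hφ0 s hs]
  · have hslope : a ≤ (φ s - φ v) / (s - v) := hconv.slope_mono_adjacent hu hs huv hvs
    rw [le_div_iff₀ (sub_pos.2 hvs)] at hslope
    linarith [hφ0 v hv]

theorem tendsto_atTop_of_pos_mul_sub_le {φ : ℝ → ℝ} {a B : ℝ} (ha : 0 < a)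
    (hφ : ∀ s, 0 ≤ s → a * s - B ≤ φ s) : Tendsto φ atTop atTop :=
  tendsto_atTop_mono' atTop ((eventually_ge_atTop 0).mono hφ)
    (tendsto_atTop_add_const_right _ (-B) (tendsto_id.const_mul_atTop ha))

theorem bddAbove_range_of_le_add_exp_neg_mul_pow {g : ℕ → ℝ} {c κ : ℝ} (hc : 0 < c)
    (hκ : 1 < κ) (hg : ∀ k, g (k + 1) ≤ g k + exp (-(c * κ ^ k))) : BddAbove (range g) := by
  set q := exp (-(c * (κ - 1)))
  have hq : q < 1 := exp_lt_one_iff.2 (by nlinarith)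
  have hstep : ∀ k : ℕ, exp (-(c * κ ^ k)) ≤ q ^ k := fun k => by
    rw [← exp_nat_mul, exp_le_exp]
    have hbern := one_add_mul_le_pow (by linarith : -2 ≤ κ - 1) k
    rw [add_sub_cancel] at hbern
    nlinarith
  have hsum : ∀ k, g k ≤ g 0 + ∑ i ∈ Finset.range k, q ^ i := fun k => by
    induction k with
    | zero => simp
    | succ k ih => rw [Finset.sum_range_succ]; linarith [hg k, hstep k]
  refine ⟨g 0 + 1 / (1 - q), forall_mem_range.2 fun k => (hsum k).trans ?_⟩
  simpa using geom_sum_Ico_le_of_lt_one (exp_pos _).le hq (m := 0) (n := k)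

theorem frequently_apply_add_exp_neg_le_mul {f : ℝ → ℝ} (hmono : MonotoneOn f (Ici 0))
    (htop : Tendsto f atTop atTop) {c κ : ℝ} (hc : 0 < c) (hκ : 1 < κ) :
    ∃ᶠ s in atTop, f (s + exp (-(c * f s))) ≤ κ * f s := by
  by_contra h
  simp only [not_frequently, not_le] at h
  obtain ⟨S, hS⟩ := (h.and ((htop.eventually_ge_atTop 1).and
    (eventually_ge_atTop 0))).exists_forall_of_atTop
  let g : ℕ → ℝ := fun k => Nat.rec S (fun _ x => x + exp (-(c * f x))) k
  have hg : ∀ k, S ≤ g k ∧ κ ^ k ≤ f (g k) := fun k => by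
    induction k with
    | zero => exact ⟨le_rfl, by simpa [g] using (hS S le_rfl).2.1⟩
    | succ k ih =>
      refine ⟨ih.1.trans (le_add_of_nonneg_right (exp_pos _).le), ?_⟩
      calc κ ^ (k + 1) = κ * κ ^ k := pow_succ' κ k
        _ ≤ κ * f (g k) := by gcongr; exact ih.2
        _ ≤ f (g (k + 1)) := (hS (g k) ih.1).1.le
  obtain ⟨M, hM⟩ := bddAbove_range_of_le_add_exp_neg_mul_pow (g := g) hc hκ fun k => by
    show g k + exp (-(c * f (g k))) ≤ g k + exp (-(c * κ ^ k))
    gcongr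
    exact (hg k).2
  obtain ⟨k, hk⟩ := pow_unbounded_of_one_lt (f M) hκ
  have hgk : 0 ≤ g k := (hS S le_rfl).2.2.trans (hg k).1
  have hgM : g k ≤ M := hM (mem_range_self k)
  exact hk.not_ge ((hg k).2.trans (hmono hgk (hgk.trans hgM) hgM))

theorem limsup_eq_of_forall_eventually_le_of_forall_frequently_ge {α : Type*} {l : Filter α}
    {u : α → ℝ} {a : ℝ} (hle : ∀ ε > 0, ∀ᶠ x in l, u x ≤ a + ε)
    (hge : ∀ ε > 0, ∃ᶠ x in l, a - ε ≤ u x) : limsup u l = a := by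
  have hbdd : IsBoundedUnder (· ≤ ·) l u := isBoundedUnder_of_eventually_le (hle 1 one_pos)
  have hcobdd : IsCoboundedUnder (· ≤ ·) l u := .of_frequently_ge (hge 1 one_pos)
  refine le_antisymm (le_of_forall_pos_le_add fun ε hε => limsup_le_of_le hcobdd (hle ε hε))
    (le_of_forall_pos_le_add fun ε hε => ?_)
  linarith [le_limsup_of_frequently_le (hge ε hε) hbdd]

section LogRatio

variable {α : Type*} {l : Filter α} {m ψ : α → ℝ} {C δ ε : ℝ}

theorem eventually_log_div_le (hψ : Tendsto ψ l atTop)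
    (hm : ∀ᶠ x in l, 0 < m x ∧ m x ≤ C * exp (-(δ * ψ x))) (hε : 0 < ε) :
    ∀ᶠ x in l, log (m x) / ψ x ≤ -δ + ε := by
  filter_upwards [hm, hψ.eventually_gt_atTop 0, hψ.eventually_ge_atTop (log C / ε)]
    with x ⟨hpos, hle⟩ hψ0 hψC
  have hC : 0 < C := pos_of_mul_pos_left (hpos.trans_le hle) (exp_pos _).le
  have hlog : log (m x) ≤ log C - δ * ψ x := by
    calc log (m x) ≤ log (C * exp (-(δ * ψ x))) := log_le_log hpos hle
      _ = log C - δ * ψ x := by rw [log_mul hC.ne' (exp_pos _).ne', log_exp]; ring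
  rw [div_le_iff₀ hε] at hψC
  rw [div_le_iff₀ hψ0]
  linarith

theorem frequently_le_log_div (hψ : Tendsto ψ l atTop) (hC : 0 < C)
    (hm : ∃ᶠ x in l, C * exp (-(δ * ψ x)) ≤ m x) (hε : 0 < ε) :
    ∃ᶠ x in l, -δ - ε ≤ log (m x) / ψ x := by
  refine (hm.and_eventually ((hψ.eventually_gt_atTop 0).and
    (hψ.eventually_ge_atTop (-log C / ε)))).mono ?_
  rintro x ⟨hle, hψ0, hψC⟩
  have hlog : log C - δ * ψ x ≤ log (m x) := by
    calc log C - δ * ψ x = log (C * exp (-(δ * ψ x))) := by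
          rw [log_mul hC.ne' (exp_pos _).ne', log_exp]; ring
      _ ≤ log (m x) := log_le_log (by positivity) hle
  rw [div_le_iff₀ hε] at hψC
  rw [le_div_iff₀ hψ0]
  linarith

end LogRatio

section ConvexBody

variable {E : Type*} [NormedAddCommGroup E] [InnerProductSpace ℝ E]

theorem exists_norm_eq_notMem_interior [FiniteDimensional ℝ E] {K : Set E} {r : ℝ}
    (hr : 0 ≤ r) (hK : closedBall (0 : E) r ⊆ K)
    (hmax : ∀ R, 0 < R → closedBall (0 : E) R ⊆ K → R ≤ r) :
    ∃ x : E, ‖x‖ = r ∧ x ∉ interior K := by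
  by_contra! h
  have hsub : closedBall (0 : E) r ⊆ interior K := fun x hx => by
    rcases (mem_closedBall_zero_iff.1 hx).lt_or_eq with hlt | heq
    · exact isOpen_ball.subset_interior_iff.2 (ball_subset_closedBall.trans hK)
        (mem_ball_zero_iff.2 hlt)
    · exact h x heq
  obtain ⟨δ, hδ, hδK⟩ :=
    (isCompact_closedBall (0 : E) r).exists_cthickening_subset_open isOpen_interior hsub
  rw [cthickening_closedBall hδ.le hr] at hδK
  linarith [hmax (δ + r) (by linarith) (hδK.trans interior_subset)]

theorem exists_unit_inner_le_of_closedBall_subset [FiniteDimensional ℝ E] {K : Set E} {r : ℝ}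
    (hKconv : Convex ℝ K) (hr : 0 < r) (hK : closedBall (0 : E) r ⊆ K)
    (hmax : ∀ R, 0 < R → closedBall (0 : E) R ⊆ K → R ≤ r) :
    ∃ θ : E, ‖θ‖ = 1 ∧ ∀ y ∈ K, ⟪θ, y⟫_ℝ ≤ r := by
  obtain ⟨x₀, hx₀r, hx₀⟩ := exists_norm_eq_notMem_interior hr.le hK hmax
  have hint : (interior K).Nonempty := ⟨0, isOpen_ball.subset_interior_iff.2
    (ball_subset_closedBall.trans hK) (mem_ball_self hr)⟩
  obtain ⟨f, u, hf0, hfK, hfx₀⟩ := geometric_hahn_banach_of_nonempty_interior hKconv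
    (convex_singleton x₀) (disjoint_singleton_right.2 hx₀) hint (singleton_nonempty x₀)
  set v := (toDual ℝ E).symm f
  have hv0 : v ≠ 0 := by simpa [v] using hf0
  refine ⟨‖v‖⁻¹ • v, by simp [norm_smul, hv0], fun y hy => ?_⟩
  calc ⟪‖v‖⁻¹ • v, y⟫_ℝ ≤ ⟪‖v‖⁻¹ • v, x₀⟫_ℝ := by
        simp only [real_inner_smul_left, v, toDual_symm_apply]
        gcongr
        exact (hfK y hy).trans (hfx₀ x₀ rfl)
    _ ≤ ‖‖v‖⁻¹ • v‖ * ‖x₀‖ := real_inner_le_norm _ _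
    _ = r := by simp [norm_smul, hv0, hx₀r]

theorem compl_smul_subset_norm_ge {K : Set E} {r t : ℝ} (hK : closedBall (0 : E) r ⊆ K)
    (ht : 0 ≤ t) : (t • K)ᶜ ⊆ {x | r * t ≤ ‖x‖} := by
  intro x hx
  show r * t ≤ ‖x‖
  by_contra! hlt
  have hr : 0 ≤ r := by
    by_contra! hr
    nlinarith [norm_nonneg x]
  refine hx (smul_set_mono hK ?_)
  rw [smul_closedBall t 0 hr, smul_zero, Real.norm_of_nonneg ht, mem_closedBall_zero_iff]
  linarith

theorem ball_subset_compl_smul {K : Set E} {θ : E} {r t ρ : ℝ} (hθ : ‖θ‖ = 1)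
    (hK : ∀ y ∈ K, ⟪θ, y⟫_ℝ ≤ r) (ht : 0 ≤ t) : ball ((r * t + ρ) • θ) ρ ⊆ (t • K)ᶜ := by
  rintro x hx ⟨y, hy, rfl⟩
  have hle := real_inner_le_norm θ ((r * t + ρ) • θ - t • y)
  rw [mem_ball, dist_comm, dist_eq_norm] at hx
  rw [inner_sub_right, real_inner_smul_right, real_inner_smul_right, real_inner_self_eq_norm_sq,
    hθ] at hle
  nlinarith [mul_le_mul_of_nonneg_left (hK y hy) ht]

end ConvexBody

noncomputable def radialMeasure {E : Type*} [NormedAddCommGroup E] [MeasurableSpace E]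
    (ν : Measure E) (φ : ℝ → ℝ) : Measure E :=
  ν.withDensity fun x => ENNReal.ofReal (exp (-φ ‖x‖))

section RadialMeasure

variable {E : Type*} [NormedAddCommGroup E] [MeasurableSpace E] [OpensMeasurableSpace E]
  (ν : Measure E) {φ : ℝ → ℝ}

theorem radialMeasure_norm_ge_le (hmono : MonotoneOn φ (Ici 0)) {T δ : ℝ} (hT : 0 ≤ T)
    (hδ : 0 ≤ δ) :
    radialMeasure ν φ {x | T ≤ ‖x‖} ≤
      ENNReal.ofReal (exp (-(δ * φ T))) * ∫⁻ x, ENNReal.ofReal (exp (-((1 - δ) * φ ‖x‖))) ∂ν := by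
  rw [radialMeasure, withDensity_apply _ (measurableSet_le measurable_const measurable_norm),
    ← lintegral_const_mul' _ _ ENNReal.ofReal_ne_top]
  refine (setLIntegral_mono' (measurableSet_le measurable_const measurable_norm)
    fun x hx => ?_).trans (setLIntegral_le_lintegral _ _)
  rw [← ENNReal.ofReal_mul (exp_pos _).le, ← exp_add]
  refine ENNReal.ofReal_le_ofReal (exp_le_exp.2 ?_)
  nlinarith [hmono hT (hT.trans hx) hx]

theorem radialMeasure_ball_ge (hmono : MonotoneOn φ (Ici 0)) (p : E) (ρ : ℝ) :
    ENNReal.ofReal (exp (-φ (‖p‖ + ρ))) * ν (ball p ρ) ≤ radialMeasure ν φ (ball p ρ) := by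
  rw [radialMeasure, withDensity_apply _ measurableSet_ball, ← setLIntegral_const]
  refine setLIntegral_mono' measurableSet_ball fun x hx => ?_
  have hx' : ‖x‖ ≤ ‖p‖ + ρ := by
    linarith [norm_le_norm_add_norm_sub' x p, (mem_ball_iff_norm.1 hx).le]
  exact ENNReal.ofReal_le_ofReal (exp_le_exp.2 (neg_le_neg
    (hmono (norm_nonneg x) ((norm_nonneg x).trans hx') hx')))

end RadialMeasure

section HaarMeasure

variable {E : Type*} [NormedAddCommGroup E] [NormedSpace ℝ E] [FiniteDimensional ℝ E]
  [MeasurableSpace E] [BorelSpace E] (ν : Measure E) [ν.IsAddHaarMeasure] {φ : ℝ → ℝ}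

theorem integrable_exp_neg_mul_norm [Nontrivial E] {b : ℝ} (hb : 0 < b) :
    Integrable (fun x : E => exp (-(b * ‖x‖))) ν := by
  rw [integrable_fun_norm_addHaar ν (f := fun y => exp (-(b * y)))]
  have := integrableOn_rpow_mul_exp_neg_mul_rpow (s := (finrank ℝ E - 1 : ℕ)) (p := 1)
    (neg_one_lt_zero.trans_le (Nat.cast_nonneg _)) one_pos hb
  simpa [Real.rpow_natCast] using this

theorem lintegral_exp_neg_mul_comp_norm_lt_top [Nontrivial E] {a B ε : ℝ} (ha : 0 < a)
    (hφ : ∀ s, 0 ≤ s → a * s - B ≤ φ s) (hε : 0 < ε) :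
    ∫⁻ x, ENNReal.ofReal (exp (-(ε * φ ‖x‖))) ∂ν < ⊤ := by
  refine lt_of_le_of_lt (lintegral_mono fun x => ENNReal.ofReal_le_ofReal ?_)
    ((integrable_exp_neg_mul_norm ν (mul_pos hε ha)).const_mul (exp (ε * B))).lintegral_lt_top
  rw [← exp_add, exp_le_exp]
  nlinarith [hφ ‖x‖ (norm_nonneg x)]

end HaarMeasure

section ConvexBodyComplement

variable {E : Type*} [NormedAddCommGroup E] [InnerProductSpace ℝ E] [FiniteDimensional ℝ E]
  [MeasurableSpace E] [BorelSpace E] (ν : Measure E) [ν.IsAddHaarMeasure] {φ : ℝ → ℝ}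
  {K : Set E} {θ : E} {r : ℝ}

theorem radialMeasure_compl_smul_ge (hmono : MonotoneOn φ (Ici 0)) (hθ : ‖θ‖ = 1)
    (hK : ∀ y ∈ K, ⟪θ, y⟫_ℝ ≤ r) (hr : 0 ≤ r) {t ρ : ℝ} (ht : 0 ≤ t) (hρ : 0 < ρ) :
    ENNReal.ofReal (exp (-φ (r * t + 2 * ρ))) *
        (ENNReal.ofReal (ρ ^ finrank ℝ E) * ν (ball 0 1)) ≤ radialMeasure ν φ (t • K)ᶜ := by
  set p := (r * t + ρ) • θ
  have hp : ‖p‖ + ρ = r * t + 2 * ρ := by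
    rw [norm_smul, hθ, mul_one, Real.norm_of_nonneg (by positivity)]
    ring
  calc _ = ENNReal.ofReal (exp (-φ (‖p‖ + ρ))) * ν (ball p ρ) := by
        rw [hp, Measure.addHaar_ball_of_pos ν p hρ]
    _ ≤ radialMeasure ν φ (ball p ρ) := radialMeasure_ball_ge ν hmono p ρ
    _ ≤ _ := measure_mono (ball_subset_compl_smul hθ hK ht)

theorem radialMeasure_real_compl_smul_pos [IsFiniteMeasure (radialMeasure ν φ)]
    (hmono : MonotoneOn φ (Ici 0)) (hθ : ‖θ‖ = 1) (hK : ∀ y ∈ K, ⟪θ, y⟫_ℝ ≤ r) (hr : 0 ≤ r)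
    {t : ℝ} (ht : 0 ≤ t) : 0 < (radialMeasure ν φ).real (t • K)ᶜ := by
  refine ENNReal.toReal_pos (lt_of_lt_of_le ?_
    (radialMeasure_compl_smul_ge ν hmono hθ hK hr ht one_pos)).ne' (measure_ne_top _ _)
  rw [one_pow, ENNReal.ofReal_one, one_mul]
  exact ENNReal.mul_pos (ENNReal.ofReal_pos.2 (exp_pos _)).ne' (measure_ball_pos ν 0 one_pos).ne'

theorem radialMeasure_real_compl_smul_le [Nontrivial E] (hmono : MonotoneOn φ (Ici 0))
    {a B : ℝ} (ha : 0 < a) (hφ : ∀ s, 0 ≤ s → a * s - B ≤ φ s) (hr : 0 ≤ r)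
    (hK : closedBall 0 r ⊆ K) {δ : ℝ} (hδ₀ : 0 ≤ δ) (hδ₁ : δ < 1) :
    ∃ C, ∀ t, 0 ≤ t → (radialMeasure ν φ).real (t • K)ᶜ ≤ C * exp (-(δ * φ (r * t))) := by
  set I := ∫⁻ x, ENNReal.ofReal (exp (-((1 - δ) * φ ‖x‖))) ∂ν
  have hI : I ≠ ⊤ := (lintegral_exp_neg_mul_comp_norm_lt_top ν ha hφ (sub_pos.2 hδ₁)).ne
  refine ⟨I.toReal, fun t ht => ?_⟩
  calc (radialMeasure ν φ).real (t • K)ᶜ ≤ (ENNReal.ofReal (exp (-(δ * φ (r * t)))) * I).toReal :=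
        ENNReal.toReal_mono (ENNReal.mul_ne_top ENNReal.ofReal_ne_top hI)
          ((measure_mono (compl_smul_subset_norm_ge hK ht)).trans
            (radialMeasure_norm_ge_le ν hmono (mul_nonneg hr ht) hδ₀))
    _ = I.toReal * exp (-(δ * φ (r * t))) := by
        rw [ENNReal.toReal_mul, ENNReal.toReal_ofReal (exp_pos _).le, mul_comm]

theorem frequently_radialMeasure_real_compl_smul_ge [IsFiniteMeasure (radialMeasure ν φ)]
    (hmono : MonotoneOn φ (Ici 0)) (htop : Tendsto φ atTop atTop) (hθ : ‖θ‖ = 1)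
    (hK : ∀ y ∈ K, ⟪θ, y⟫_ℝ ≤ r) (hr : 0 < r) {δ : ℝ} (hδ : 1 < δ) :
    ∃ C > 0, ∃ᶠ t in atTop, C * exp (-(δ * φ (r * t))) ≤ (radialMeasure ν φ).real (t • K)ᶜ := by
  set d := finrank ℝ E
  -- The factor `ρ ^ d` costs `d * c` in the exponent; `c` is small enough that the remaining
  -- growth factor `δ - d * c` of `φ` still exceeds `1`.
  obtain ⟨c, hc, hκ⟩ : ∃ c : ℝ, 0 < c ∧ 1 < δ - d * c := by
    have hd : (0 : ℝ) ≤ d := Nat.cast_nonneg d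
    refine ⟨(δ - 1) / (2 * (d + 1)), div_pos (by linarith) (by positivity), ?_⟩
    rw [mul_div_assoc', lt_sub_iff_add_lt, ← lt_sub_iff_add_lt', div_lt_iff₀ (by positivity)]
    nlinarith
  set V := ν.real (ball 0 1)
  have hV : 0 < V :=
    ENNReal.toReal_pos (measure_ball_pos ν 0 one_pos).ne' measure_ball_lt_top.ne
  refine ⟨V / 2 ^ d, by positivity, ?_⟩
  have hfreq : ∃ᶠ t in atTop,
      φ (r * t + exp (-(c * φ (r * t)))) ≤ (δ - d * c) * φ (r * t) :=
    (tendsto_id.atTop_div_const hr).frequently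
      ((frequently_apply_add_exp_neg_le_mul hmono htop hc hκ).mono fun s hs => by
        rwa [id, mul_div_cancel₀ _ hr.ne'])
  refine (hfreq.and_eventually (eventually_ge_atTop 0)).mono fun t ⟨hφt, ht⟩ => ?_
  set ρ := exp (-(c * φ (r * t))) / 2
  have hball := ENNReal.toReal_mono (measure_ne_top _ _)
    (radialMeasure_compl_smul_ge ν hmono hθ hK hr.le ht (ρ := ρ) (by positivity))
  rw [ENNReal.toReal_mul, ENNReal.toReal_mul, ENNReal.toReal_ofReal (exp_pos _).le,
    ENNReal.toReal_ofReal (by positivity)] at hball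
  refine le_trans ?_ hball
  have hexp : exp (-(δ * φ (r * t))) =
      exp (-((δ - d * c) * φ (r * t))) * exp (-(c * φ (r * t))) ^ d := by
    rw [← exp_nat_mul, ← exp_add]
    ring_nf
  calc V / 2 ^ d * exp (-(δ * φ (r * t))) = exp (-((δ - d * c) * φ (r * t))) * (ρ ^ d * V) := by
        rw [hexp, div_pow]
        ring
    _ ≤ exp (-φ (r * t + 2 * ρ)) * (ρ ^ d * V) := by
        gcongr
        rw [mul_div_cancel₀ _ two_ne_zero]
        exact hφt

end ConvexBodyComplement

theorem stmt5_general (n : ℕ) (hn : 2 ≤ n)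
    (φ : ℝ → ℝ)
    (hmono : MonotoneOn φ (Set.Ici 0))
    (hconv : ConvexOn ℝ (Set.Ici 0) φ)
    (hnc : ∃ s t : ℝ, 0 ≤ s ∧ 0 ≤ t ∧ φ s ≠ φ t)
    (μ : Measure (EuclideanSpace ℝ (Fin n)))
    (hμ : μ = volume.withDensity fun x => ENNReal.ofReal (Real.exp (-φ ‖x‖)))
    (hprob : IsProbabilityMeasure μ)
    (K : Set (EuclideanSpace ℝ (Fin n)))
    (hKconv : Convex ℝ K)
    (r : ℝ)
    (hr : IsGreatest {R : ℝ | 0 < R ∧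
        R • Metric.closedBall (0 : EuclideanSpace ℝ (Fin n)) 1 ⊆ K} r) :
    Filter.limsup
      (fun t => Real.log (μ (t • K)ᶜ).toReal / φ (r * t))
      Filter.atTop = -1 := by
  subst hμ
  change IsProbabilityMeasure (radialMeasure volume φ) at hprob
  show limsup (fun t => log ((radialMeasure volume φ).real (t • K)ᶜ) / φ (r * t)) atTop = -1
  have : Nontrivial (EuclideanSpace ℝ (Fin n)) := by
    have : Nonempty (Fin n) := ⟨⟨0, by omega⟩⟩
    infer_instance
  obtain ⟨a, B, ha, hφ⟩ := exists_pos_mul_sub_le_of_convexOn hmono hconv hnc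
  obtain ⟨⟨hr₀, hrK⟩, hrmax⟩ := hr
  rw [smul_unitClosedBall_of_nonneg hr₀.le] at hrK
  obtain ⟨θ, hθ, hθK⟩ := exists_unit_inner_le_of_closedBall_subset hKconv hr₀ hrK
    fun R hR hRK => hrmax ⟨hR, by rwa [smul_unitClosedBall_of_nonneg hR.le]⟩
  have htop := tendsto_atTop_of_pos_mul_sub_le ha hφ
  have hψ : Tendsto (fun t => φ (r * t)) atTop atTop :=
    htop.comp (tendsto_id.const_mul_atTop hr₀)
  apply limsup_eq_of_forall_eventually_le_of_forall_frequently_ge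
  · intro ε hε
    have hε' : 0 < min ε 1 := lt_min hε one_pos
    obtain ⟨C, hC⟩ := radialMeasure_real_compl_smul_le volume hmono ha hφ hr₀.le hrK
      (δ := 1 - min ε 1 / 2) (by linarith [min_le_right ε 1]) (by linarith)
    have hm := ((eventually_ge_atTop 0).mono fun t ht =>
      radialMeasure_real_compl_smul_pos volume hmono hθ hθK hr₀.le ht).and
      ((eventually_ge_atTop 0).mono hC)
    filter_upwards [eventually_log_div_le hψ hm (half_pos hε')] with t ht
    linarith [min_le_left ε 1]
  · intro ε hε
    obtain ⟨C, hC, hCt⟩ := frequently_radialMeasure_real_compl_smul_ge volume hmono htop hθ hθK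
      hr₀ (by linarith : 1 < 1 + ε / 2)
    exact (frequently_le_log_div hψ hC hCt (half_pos hε)).mono fun t ht => by linarith

theorem stmt5 (n : ℕ) (hn : 2 ≤ n)
    (φ : ℝ → ℝ)
    (hmono : MonotoneOn φ (Set.Ici 0))
    (hconv : ConvexOn ℝ (Set.Ici 0) φ)
    (hnonneg : ∀ t ∈ Set.Ici (0 : ℝ), 0 ≤ φ t)
    (hnc : ∃ s t : ℝ, 0 ≤ s ∧ 0 ≤ t ∧ φ s ≠ φ t)
    (μ : Measure (EuclideanSpace ℝ (Fin n)))
    (hμ : μ = volume.withDensity fun x => ENNReal.ofReal (Real.exp (-φ ‖x‖)))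
    (hprob : IsProbabilityMeasure μ)
    (K : Set (EuclideanSpace ℝ (Fin n)))
    (hKcomp : IsCompact K) (hKconv : Convex ℝ K)
    (hKint : (interior K).Nonempty) (hKsymm : K = -K)
    (r : ℝ)
    (hr : IsGreatest {R : ℝ | 0 < R ∧
        R • Metric.closedBall (0 : EuclideanSpace ℝ (Fin n)) 1 ⊆ K} r) :
    Filter.limsup
      (fun t => Real.log (μ (t • K)ᶜ).toReal / φ (r * t))
      Filter.atTop = -1 :=
  stmt5_general n hn φ hmono hconv hnc μ hμ hprob K hKconv r hr
end

section
/- Let φ : [0,∞) → [0,∞) be an increasing, convex, non-constant function, let R > 0, and let m be a nonnegative integer. Then limsup_{t→∞} ln(∫_{tR}^∞ (z - tR)^m e^{-φ(z)} dz) / φ(Rt) ≥ -1. -/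
/-!
Convexity and non-constancy make `φ` grow at least linearly, so the tail integral `I(a)` is
finite, nonnegative and at most `I(0)`; hence `log I(a) / φ(a)` is eventually bounded above.
Restricting the integral to `(a, a + δ)` gives `I(a) ≥ δ^(m+1) / (m+1) · exp(-φ(a + δ))`, and with
`δ = exp(-ε φ(a))` this is `log I(a) ≥ -(1 + O(ε)) φ(a)` at every `a` with
`φ(a + δ) ≤ (1 + ε) φ(a)`. Such `a` exist arbitrarily far out: otherwise `φ` would blow up
along an orbit of `x ↦ x + exp(-ε φ(x))`, whose steps are summable.
-/

open MeasureTheory Filter Set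

noncomputable def tailMoment (φ : ℝ → ℝ) (m : ℕ) (a : ℝ) : ℝ :=
  ∫ z in Ioi a, (z - a) ^ m * Real.exp (-φ z)

theorem ConvexOn.exists_pos_mul_sub_le_of_monotoneOn {φ : ℝ → ℝ}
    (hconv : ConvexOn ℝ (Ici 0) φ) (hmono : MonotoneOn φ (Ici 0)) {s t : ℝ} (hs : 0 ≤ s)
    (ht : 0 ≤ t) (hne : φ s ≠ φ t) :
    ∃ α > 0, ∃ β, ∀ x, 0 ≤ x → α * x - β ≤ φ x := by
  wlog hlt : φ s < φ t generalizing s t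
  · exact this ht hs hne.symm (hne.lt_or_gt.resolve_left hlt)
  have hst : s < t := hmono.reflect_lt hs ht hlt
  set k := (φ t - φ s) / (t - s)
  have hk : 0 < k := div_pos (sub_pos.2 hlt) (sub_pos.2 hst)
  refine ⟨k, hk, k * t - φ 0, fun x hx => ?_⟩
  have hφs : φ 0 ≤ φ s := hmono self_mem_Ici hs hs
  rcases le_or_gt x t with hxt | htx
  · have hφx : φ 0 ≤ φ x := hmono self_mem_Ici hx hx
    nlinarith
  · have hsec : k ≤ (φ x - φ s) / (x - s) :=
      hconv.secant_mono hs ht hx hst.ne' (by linarith) htx.le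
    rw [le_div_iff₀ (by linarith)] at hsec
    nlinarith

theorem integrableOn_sub_pow_mul_exp_neg_of_linear_le {φ : ℝ → ℝ}
    (hmono : MonotoneOn φ (Ici 0)) {α β : ℝ} (hα : 0 < α)
    (hlin : ∀ x, 0 ≤ x → α * x - β ≤ φ x) (m : ℕ) {a : ℝ} (ha : 0 ≤ a) :
    IntegrableOn (fun z => (z - a) ^ m * Real.exp (-φ z)) (Ioi a) := by
  have hdom : IntegrableOn (fun z : ℝ => Real.exp β * (z ^ m * Real.exp (-α * z))) (Ioi a) := by
    have := integrableOn_rpow_mul_exp_neg_mul_rpow (s := m)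
      (neg_one_lt_zero.trans_le m.cast_nonneg) one_pos hα
    simp only [Real.rpow_natCast, Real.rpow_one] at this
    exact (this.mono_set (Ioi_subset_Ioi ha)).const_mul _
  have hφ : AEMeasurable φ (volume.restrict (Ioi a)) :=
    aemeasurable_restrict_of_monotoneOn measurableSet_Ioi
      (hmono.mono fun z hz => ha.trans (le_of_lt hz))
  refine hdom.mono' (((continuous_id.sub continuous_const).pow m).aestronglyMeasurable.mul
    hφ.neg.exp.aestronglyMeasurable) ?_
  filter_upwards [ae_restrict_mem measurableSet_Ioi] with z (hz : a < z)
  have hza : 0 ≤ z - a := by linarith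
  rw [Real.norm_of_nonneg (by positivity), mul_left_comm, ← Real.exp_add]
  exact mul_le_mul (pow_le_pow_left₀ hza (by linarith) m)
    (Real.exp_le_exp.2 (by linarith [hlin z (by linarith)])) (Real.exp_pos _).le
    (pow_nonneg (by linarith) m)

theorem tailMoment_nonneg (φ : ℝ → ℝ) (m : ℕ) (a : ℝ) : 0 ≤ tailMoment φ m a :=
  setIntegral_nonneg measurableSet_Ioi fun z (hz : a < z) =>
    mul_nonneg (pow_nonneg (by linarith) m) (Real.exp_pos _).le

theorem tailMoment_le_tailMoment_zero {φ : ℝ → ℝ} {m : ℕ}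
    (hint : ∀ a, 0 ≤ a → IntegrableOn (fun z => (z - a) ^ m * Real.exp (-φ z)) (Ioi a))
    {a : ℝ} (ha : 0 ≤ a) : tailMoment φ m a ≤ tailMoment φ m 0 := by
  have hint0 := hint 0 le_rfl
  calc tailMoment φ m a ≤ ∫ z in Ioi a, (z - 0) ^ m * Real.exp (-φ z) := by
        refine setIntegral_mono_on (hint a ha) (hint0.mono_set (Ioi_subset_Ioi ha))
          measurableSet_Ioi fun z (hz : a < z) => ?_
        gcongr
    _ ≤ tailMoment φ m 0 := by
        refine setIntegral_mono_set hint0 ?_ (Ioi_subset_Ioi ha).eventuallyLE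
        filter_upwards [ae_restrict_mem measurableSet_Ioi] with z (hz : 0 < z)
        positivity

theorem pow_succ_div_mul_exp_le_tailMoment {φ : ℝ → ℝ} (hmono : MonotoneOn φ (Ici 0)) {m : ℕ}
    {a : ℝ} (ha : 0 ≤ a)
    (hint : IntegrableOn (fun z => (z - a) ^ m * Real.exp (-φ z)) (Ioi a)) {δ : ℝ} (hδ : 0 ≤ δ) :
    δ ^ (m + 1) / (m + 1) * Real.exp (-φ (a + δ)) ≤ tailMoment φ m a := by
  have hbox : ∫ z in Ioc a (a + δ), (z - a) ^ m * Real.exp (-φ (a + δ)) =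
      δ ^ (m + 1) / (m + 1) * Real.exp (-φ (a + δ)) := by
    rw [← intervalIntegral.integral_of_le (by linarith), intervalIntegral.integral_mul_const,
      intervalIntegral.integral_comp_sub_right (fun u => u ^ m), sub_self, add_sub_cancel_left,
      integral_pow]
    ring
  rw [← hbox]
  calc ∫ z in Ioc a (a + δ), (z - a) ^ m * Real.exp (-φ (a + δ))
      ≤ ∫ z in Ioc a (a + δ), (z - a) ^ m * Real.exp (-φ z) := by
        refine setIntegral_mono_on (Continuous.integrableOn_Ioc (by fun_prop))
          (hint.mono_set Ioc_subset_Ioi_self) measurableSet_Ioc fun z hz => ?_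
        have hφ : φ z ≤ φ (a + δ) := hmono (ha.trans hz.1.le) (ha.trans (by linarith [hz.2])) hz.2
        have hza : 0 ≤ z - a := by linarith [hz.1]
        gcongr
    _ ≤ tailMoment φ m a := by
        refine setIntegral_mono_set hint ?_ Ioc_subset_Ioi_self.eventuallyLE
        filter_upwards [ae_restrict_mem measurableSet_Ioi] with z (hz : a < z)
        have : 0 ≤ z - a := by linarith
        positivity

theorem le_add_inv_one_sub_of_sub_le_pow {u : ℕ → ℝ} {r : ℝ} (hr₀ : 0 ≤ r) (hr₁ : r < 1)
    (hu : ∀ n, u (n + 1) - u n ≤ r ^ n) (n : ℕ) : u n ≤ u 0 + (1 - r)⁻¹ := by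
  have hsum : u n - u 0 ≤ ∑ k ∈ Finset.range n, r ^ k := by
    rw [← Finset.sum_range_sub]
    exact Finset.sum_le_sum fun k _ => hu k
  have hgeom := geom_sum_Ico_le_of_lt_one (m := 0) (n := n) hr₀ hr₁
  rw [← Finset.range_eq_Ico, pow_zero, one_div] at hgeom
  linarith

theorem MonotoneOn.frequently_add_exp_neg_le_one_add_mul {φ : ℝ → ℝ}
    (hmono : MonotoneOn φ (Ici 0)) (htop : Tendsto φ atTop atTop) {ε : ℝ} (hε : 0 < ε) :
    ∃ᶠ a in atTop, φ (a + Real.exp (-(ε * φ a))) ≤ (1 + ε) * φ a := by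
  by_contra hcon
  rw [not_frequently] at hcon
  obtain ⟨A, hA⟩ := eventually_atTop.1
    ((hcon.and (htop.eventually_ge_atTop 1)).and (eventually_ge_atTop 0))
  set step : ℝ → ℝ := fun x => x + Real.exp (-(ε * φ x))
  set u : ℕ → ℝ := fun n => step^[n] A
  have hu_succ : ∀ n, u (n + 1) = u n + Real.exp (-(ε * φ (u n))) := fun n =>
    Function.iterate_succ_apply' step n A
  have hA_le : ∀ n, A ≤ u n := by
    intro n
    induction n with
    | zero => exact le_rfl
    | succ n ih => rw [hu_succ]; linarith [Real.exp_pos (-(ε * φ (u n)))]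
  have hφu : ∀ n, (1 + ε) ^ n ≤ φ (u n) := by
    intro n
    induction n with
    | zero => simpa [u] using (hA A le_rfl).1.2
    | succ n ih =>
      rw [hu_succ, pow_succ']
      have := (hA (u n) (hA_le n)).1.1
      nlinarith
  set r := Real.exp (-(ε * ε))
  have hstep : ∀ n, u (n + 1) - u n ≤ r ^ n := by
    intro n
    rw [hu_succ, add_sub_cancel_left, ← Real.exp_nat_mul]
    apply Real.exp_le_exp.2
    nlinarith [one_add_mul_le_pow (by linarith : (-2 : ℝ) ≤ ε) n, hφu n]
  have hbdd := le_add_inv_one_sub_of_sub_le_pow (Real.exp_pos _).le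
    (Real.exp_lt_one_iff.2 (by nlinarith)) hstep
  obtain ⟨n, hn⟩ := pow_unbounded_of_one_lt (φ (u 0 + (1 - r)⁻¹)) (by linarith : (1 : ℝ) < 1 + ε)
  have hA₀ := (hA A le_rfl).2
  have : φ (u n) ≤ φ (u 0 + (1 - r)⁻¹) :=
    hmono (hA₀.trans (hA_le n)) (hA₀.trans ((hA_le n).trans (hbdd n))) (hbdd n)
  linarith [hφu n]

theorem frequently_neg_one_sub_le_log_tailMoment_div {φ : ℝ → ℝ} (hmono : MonotoneOn φ (Ici 0))
    (htop : Tendsto φ atTop atTop) {m : ℕ}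
    (hint : ∀ a, 0 ≤ a → IntegrableOn (fun z => (z - a) ^ m * Real.exp (-φ z)) (Ioi a))
    {ε : ℝ} (hε : 0 < ε) :
    ∃ᶠ a in atTop, -1 - ε ≤ Real.log (tailMoment φ m a) / φ a := by
  set ε' := ε / (2 * (m + 2))
  have hε' : 0 < ε' := by positivity
  refine ((hmono.frequently_add_exp_neg_le_one_add_mul htop hε').and_eventually
    ((htop.eventually_ge_atTop (max 1 (2 * Real.log (m + 1) / ε))).and
      (eventually_ge_atTop 0))).mono ?_
  rintro a ⟨hgrowth, hφa, ha⟩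
  set δ := Real.exp (-(ε' * φ a))
  have hφ₁ : 1 ≤ φ a := (le_max_left _ _).trans hφa
  have hlog_m : 2 * Real.log (m + 1) ≤ ε * φ a := by
    have := (le_max_right _ _).trans hφa
    rw [div_le_iff₀ hε] at this
    linarith
  have hε'φ : (m + 2) * ε' * φ a = ε / 2 * φ a := by
    simp only [ε']
    field_simp
  have hlow := Real.log_le_log (by positivity)
    (pow_succ_div_mul_exp_le_tailMoment hmono ha (hint a ha) (Real.exp_pos _).le (δ := δ))
  rw [Real.log_mul (by positivity) (by positivity), Real.log_div (by positivity) (by positivity),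
    Real.log_pow, Real.log_exp, Real.log_exp] at hlow
  push_cast at hlow
  rw [le_div_iff₀ (by linarith)]
  linarith

theorem isBoundedUnder_log_tailMoment_div {φ : ℝ → ℝ} (htop : Tendsto φ atTop atTop) {m : ℕ}
    (hint : ∀ a, 0 ≤ a → IntegrableOn (fun z => (z - a) ^ m * Real.exp (-φ z)) (Ioi a)) :
    IsBoundedUnder (· ≤ ·) atTop fun a => Real.log (tailMoment φ m a) / φ a := by
  refine isBoundedUnder_of_eventually_le (a := tailMoment φ m 0) ?_
  filter_upwards [htop.eventually_ge_atTop 1, eventually_ge_atTop 0] with a hφa ha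
  have hI := tailMoment_nonneg φ m 0
  refine div_le_of_le_mul₀ (by linarith) hI ?_
  calc Real.log (tailMoment φ m a) ≤ tailMoment φ m a :=
        Real.log_le_self (tailMoment_nonneg φ m a)
    _ ≤ tailMoment φ m 0 := tailMoment_le_tailMoment_zero hint ha
    _ ≤ tailMoment φ m 0 * φ a := le_mul_of_one_le_right hI hφa

theorem neg_one_le_limsup_log_tailMoment_div {φ : ℝ → ℝ} (hmono : MonotoneOn φ (Ici 0))
    (htop : Tendsto φ atTop atTop) {m : ℕ}
    (hint : ∀ a, 0 ≤ a → IntegrableOn (fun z => (z - a) ^ m * Real.exp (-φ z)) (Ioi a)) :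
    -1 ≤ limsup (fun a => Real.log (tailMoment φ m a) / φ a) atTop :=
  le_of_forall_sub_le fun _ hε => le_limsup_of_frequently_le
    (frequently_neg_one_sub_le_log_tailMoment_div hmono htop hint hε)
    (isBoundedUnder_log_tailMoment_div htop hint)

theorem stmt6_general (φ : ℝ → ℝ)
    (hmono : MonotoneOn φ (Set.Ici 0))
    (hconv : ConvexOn ℝ (Set.Ici 0) φ)
    (hnc : ∃ s t : ℝ, 0 ≤ s ∧ 0 ≤ t ∧ φ s ≠ φ t)
    (R : ℝ) (hR : 0 < R) (m : ℕ) :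
    -1 ≤ Filter.limsup
      (fun t =>
        Real.log (∫ z in Set.Ioi (t * R), (z - t * R) ^ m * Real.exp (-φ z)) / φ (R * t))
      Filter.atTop := by
  obtain ⟨s, t, hs, ht, hne⟩ := hnc
  obtain ⟨α, hα, β, hlin⟩ := hconv.exists_pos_mul_sub_le_of_monotoneOn hmono hs ht hne
  have htop : Tendsto φ atTop atTop :=
    tendsto_atTop_mono' atTop (eventually_ge_atTop 0 |>.mono hlin)
      (tendsto_atTop_add_const_right _ (-β) (tendsto_id.const_mul_atTop hα))
  have hlimsup := neg_one_le_limsup_log_tailMoment_div hmono htop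
    (fun a ha => integrableOn_sub_pow_mul_exp_neg_of_linear_le hmono hα hlin m ha)
  have hscale : map (fun t => t * R) atTop = atTop := (OrderIso.mulRight₀ R hR).map_atTop
  rw [← hscale, ← limsup_comp] at hlimsup
  simpa only [Function.comp_def, tailMoment, mul_comm R] using hlimsup

theorem stmt6 (φ : ℝ → ℝ)
    (hmono : MonotoneOn φ (Set.Ici 0))
    (hconv : ConvexOn ℝ (Set.Ici 0) φ)
    (hnonneg : ∀ t ∈ Set.Ici (0 : ℝ), 0 ≤ φ t)
    (hnc : ∃ s t : ℝ, 0 ≤ s ∧ 0 ≤ t ∧ φ s ≠ φ t)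
    (R : ℝ) (hR : 0 < R) (m : ℕ) :
    -1 ≤ Filter.limsup
      (fun t =>
        Real.log (∫ z in Set.Ioi (t * R), (z - t * R) ^ m * Real.exp (-φ z)) / φ (R * t))
      Filter.atTop :=
  stmt6_general φ hmono hconv hnc R hR m
end

section
/- Let φ : [0,∞) → [0,∞) be an increasing, convex, non-constant function, let m be a positive integer, and set F_m(t) = ∫_t^∞ (r - t)^m e^{-φ(r)} dr. Then for every t ≥ 0, F_{m-1}(t) ≥ (φ'₋(t)/m) · F_m(t), where φ'₋(t) denotes the left derivative of φ at t (and the right derivative at t = 0). -/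
open MeasureTheory Filter Set

/-!
Put `c = φ'₋(t)`; for `c ≤ 0` the left side is nonpositive. For `c > 0`, convexity makes
`g r = φ r - c r` nondecreasing on `[t, ∞)`. The weight `w r = (r - t)^(m-1) (m - c (r - t))` is
the derivative of `(r - t)^m e^{-c r}` divided by `e^{-c r}`, so `∫_t^∞ w e^{-c r} = 0`, and `w`
changes sign from `+` to `-` at `s = t + m / c`. Since `e^{-φ} = e^{-g} e^{-c r}` and
`e^{-g r} - e^{-g s}` changes sign the same way, `∫ w e^{-φ} ≥ e^{-g s} ∫ w e^{-c r} = 0`,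
which is `m F_{m-1}(t) ≥ c F_m(t)`.
-/

open Real Topology

namespace ConvexOn

variable {S : Set ℝ} {f : ℝ → ℝ} {x y c : ℝ}

lemma leftDeriv_Iic_le_slope_of_mem_interior (hfc : ConvexOn ℝ S f) (hxs : x ∈ interior S)
    (hys : y ∈ S) (hxy : x < y) : derivWithin f (Iic x) x ≤ slope f x y := by
  have h := (hfc.hasDerivWithinAt_leftDeriv_of_mem_interior hxs).Iic_of_Iio
  rw [h.derivWithin (uniqueDiffWithinAt_Iic x)]
  exact (hfc.leftDeriv_le_rightDeriv_of_mem_interior hxs).trans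
    (hfc.rightDeriv_le_slope_of_mem_interior hxs hys hxy)

lemma monotoneOn_sub_mul_of_le_slope (hfc : ConvexOn ℝ S f) (hx : x ∈ S)
    (hc : ∀ y ∈ S, x < y → c ≤ slope f x y) :
    MonotoneOn (fun y => f y - c * y) (S ∩ Ici x) := by
  rintro a ⟨haS, hxa⟩ b ⟨hbS, -⟩ hab
  rcases hab.eq_or_lt with rfl | hab
  · rfl
  have hcab : c ≤ slope f a b := by
    rcases (mem_Ici.1 hxa).eq_or_lt with rfl | hxa
    · exact hc b hbS hab
    · refine (hc a haS hxa).trans ?_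
      simpa only [slope_def_field] using hfc.slope_mono_adjacent hx hbS hxa hab
  rw [slope_def_field, le_div_iff₀ (sub_pos.2 hab)] at hcab
  dsimp only
  linarith

end ConvexOn

section ExpWeight

variable {c t : ℝ}

lemma integrableOn_sub_pow_weight_mul {g : ℝ → ℝ}
    (hg : ∀ k : ℕ, IntegrableOn (fun r => (r - t) ^ k * g r) (Ioi t)) (a b : ℝ) (n : ℕ) :
    IntegrableOn (fun r => (a * (r - t) ^ n - b * (r - t) ^ (n + 1)) * g r) (Ioi t) :=
  IntegrableOn.congr_fun (((hg n).const_mul a).sub ((hg (n + 1)).const_mul b))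
    (fun r _ => by simp only [Pi.sub_apply]; ring) measurableSet_Ioi

lemma tendsto_sub_pow_mul_exp_neg_mul_atTop (hc : 0 < c) (k : ℕ) :
    Tendsto (fun r => (r - t) ^ k * exp (-(c * r))) atTop (𝓝 0) := by
  have h := ((tendsto_rpow_mul_exp_neg_mul_atTop_nhds_zero k c hc).comp
    (tendsto_atTop_add_const_right atTop (-t) tendsto_id)).const_mul (exp (-(c * t)))
  rw [mul_zero] at h
  refine h.congr fun r => ?_
  simp only [Function.comp_apply, id, rpow_natCast, ← sub_eq_add_neg]
  rw [mul_left_comm, ← exp_add]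
  ring_nf

lemma integrableOn_sub_pow_mul_exp_neg_mul (hc : 0 < c) (k : ℕ) :
    IntegrableOn (fun r => (r - t) ^ k * exp (-(c * r))) (Ioi t) := by
  refine integrable_of_isBigO_exp_neg (half_pos hc) (by fun_prop) ?_
  refine (Asymptotics.isLittleO_of_tendsto (fun r h => absurd h (exp_ne_zero _)) ?_).isBigO
  refine (tendsto_sub_pow_mul_exp_neg_mul_atTop (t := t) (half_pos hc) k).congr fun r => ?_
  rw [mul_div_assoc, ← exp_sub]
  ring_nf

lemma integral_sub_pow_weight_mul_exp_neg_mul (hc : 0 < c) (n : ℕ) :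
    ∫ r in Ioi t, ((n + 1) * (r - t) ^ n - c * (r - t) ^ (n + 1)) * exp (-(c * r)) = 0 := by
  have hderiv : ∀ r ∈ Ici t, HasDerivAt (fun r => (r - t) ^ (n + 1) * exp (-(c * r)))
      (((n + 1) * (r - t) ^ n - c * (r - t) ^ (n + 1)) * exp (-(c * r))) r := by
    intro r _
    have hpow : HasDerivAt (fun r => (r - t) ^ (n + 1)) ((n + 1 : ℕ) * (r - t) ^ n) r := by
      simpa using ((hasDerivAt_id r).sub_const t).fun_pow (n + 1)
    have hexp : HasDerivAt (fun r => exp (-(c * r))) (exp (-(c * r)) * -c) r := by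
      simpa using ((hasDerivAt_id r).const_mul c).fun_neg.exp
    refine (hpow.fun_mul hexp).congr_deriv ?_
    push_cast
    ring
  simpa using integral_Ioi_of_hasDerivAt_of_tendsto' hderiv
    (integrableOn_sub_pow_weight_mul (integrableOn_sub_pow_mul_exp_neg_mul hc) _ c n)
    (tendsto_sub_pow_mul_exp_neg_mul_atTop hc (n + 1))

lemma sub_pow_weight_mul_exp_neg_sub_nonneg {g : ℝ → ℝ} (hc : 0 < c)
    (hg : MonotoneOn g (Ici t)) (n : ℕ) {r : ℝ} (hr : t ≤ r) :
    0 ≤ ((n + 1) * (r - t) ^ n - c * (r - t) ^ (n + 1)) *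
      (exp (-g r) - exp (-g (t + (n + 1) / c))) := by
  have hts : t ≤ t + (n + 1) / c := le_add_of_nonneg_right (by positivity)
  have hrt : 0 ≤ r - t := sub_nonneg.2 hr
  rw [show (n + 1) * (r - t) ^ n - c * (r - t) ^ (n + 1) = (r - t) ^ n * ((n + 1) - c * (r - t))
    by ring]
  rcases le_total r (t + (n + 1) / c) with hrs | hsr
  · have hcr : c * (r - t) ≤ n + 1 := by
      rw [mul_comm, ← le_div_iff₀ hc]; linarith
    exact mul_nonneg (mul_nonneg (pow_nonneg hrt n) (by linarith))
      (sub_nonneg.2 (exp_le_exp.2 (neg_le_neg (hg hr hts hrs))))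
  · have hcr : n + 1 ≤ c * (r - t) := by
      rw [mul_comm, ← div_le_iff₀ hc]; linarith
    exact mul_nonneg_of_nonpos_of_nonpos
      (mul_nonpos_of_nonneg_of_nonpos (pow_nonneg hrt n) (by linarith))
      (sub_nonpos.2 (exp_le_exp.2 (neg_le_neg (hg hts hr hsr))))

end ExpWeight

section LinearlyGrowing

variable {φ : ℝ → ℝ} {c t : ℝ}

lemma exp_neg_eq_exp_neg_sub_mul_mul (φ : ℝ → ℝ) (c r : ℝ) :
    exp (-φ r) = exp (-(φ r - c * r)) * exp (-(c * r)) := by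
  rw [← exp_add]
  ring_nf

lemma integrableOn_sub_pow_mul_exp_neg_of_monotoneOn (hc : 0 < c)
    (hφ : MonotoneOn (fun r => φ r - c * r) (Ici t)) (k : ℕ) :
    IntegrableOn (fun r => (r - t) ^ k * exp (-φ r)) (Ioi t) := by
  have hmeas : AEMeasurable φ (volume.restrict (Ioi t)) := by
    have h := (aemeasurable_restrict_of_monotoneOn (μ := volume) measurableSet_Ioi
      (hφ.mono Ioi_subset_Ici_self)).add (measurable_id.const_mul c).aemeasurable
    exact h.congr (ae_of_all _ fun r => sub_add_cancel (φ r) (c * r))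
  refine ((integrableOn_sub_pow_mul_exp_neg_mul hc k).const_mul
    (exp (-(φ t - c * t)))).mono' ?_ ?_
  · exact ((continuous_id.sub continuous_const).pow k).aemeasurable.mul
      hmeas.neg.exp |>.aestronglyMeasurable
  · filter_upwards [ae_restrict_mem measurableSet_Ioi] with r (hr : t < r)
    have hrt : 0 ≤ r - t := sub_nonneg.2 hr.le
    calc ‖(r - t) ^ k * exp (-φ r)‖
        = exp (-(φ r - c * r)) * ((r - t) ^ k * exp (-(c * r))) := by
          rw [norm_of_nonneg (by positivity), exp_neg_eq_exp_neg_sub_mul_mul φ c r]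
          ring
      _ ≤ exp (-(φ t - c * t)) * ((r - t) ^ k * exp (-(c * r))) := by
          gcongr ?_ * _
          exact exp_le_exp.2 (neg_le_neg (hφ self_mem_Ici (mem_Ici.2 hr.le) hr.le))

theorem mul_integral_sub_pow_succ_mul_exp_neg_le (hc : 0 < c)
    (hφ : MonotoneOn (fun r => φ r - c * r) (Ici t)) (n : ℕ) :
    c * ∫ r in Ioi t, (r - t) ^ (n + 1) * exp (-φ r) ≤
      (n + 1) * ∫ r in Ioi t, (r - t) ^ n * exp (-φ r) := by
  set w : ℝ → ℝ := fun r => (n + 1) * (r - t) ^ n - c * (r - t) ^ (n + 1) with hw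
  set s : ℝ := t + (n + 1) / c
  set K : ℝ := exp (-(φ s - c * s))
  have hint := integrableOn_sub_pow_mul_exp_neg_of_monotoneOn hc hφ
  have hsplit : ∫ r in Ioi t, w r * exp (-φ r) =
      (n + 1) * (∫ r in Ioi t, (r - t) ^ n * exp (-φ r)) -
        c * ∫ r in Ioi t, (r - t) ^ (n + 1) * exp (-φ r) := by
    rw [← integral_const_mul, ← integral_const_mul,
      ← integral_sub ((hint n).const_mul _) ((hint (n + 1)).const_mul _)]
    exact integral_congr_ae (ae_of_all _ fun r => by simp only [hw]; ring)
  have hzero : ∫ r in Ioi t, K * (w r * exp (-(c * r))) = 0 := by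
    rw [integral_const_mul, (integral_sub_pow_weight_mul_exp_neg_mul hc n :
      ∫ r in Ioi t, w r * exp (-(c * r)) = 0), mul_zero]
  have hpt : ∀ r ∈ Ioi t, K * (w r * exp (-(c * r))) ≤ w r * exp (-φ r) := by
    intro r (hr : t < r)
    have hsign := sub_pow_weight_mul_exp_neg_sub_nonneg hc hφ n hr.le
    beta_reduce at hsign
    rw [exp_neg_eq_exp_neg_sub_mul_mul φ c r]
    nlinarith [mul_nonneg hsign (exp_pos (-(c * r))).le]
  have hcomp := setIntegral_mono_on
    ((integrableOn_sub_pow_weight_mul (integrableOn_sub_pow_mul_exp_neg_mul hc) _ c n).const_mul K)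
    (integrableOn_sub_pow_weight_mul hint (n + 1) c n) measurableSet_Ioi hpt
  linarith

end LinearlyGrowing

theorem stmt8_general (φ : ℝ → ℝ)
    (hconv : ConvexOn ℝ (Set.Ici 0) φ)
    (F : ℕ → ℝ → ℝ)
    (hF : ∀ m t, F m t = ∫ r in Set.Ioi t, (r - t) ^ m * Real.exp (-φ r))
    (φ' : ℝ → ℝ)
    (hφ'pos : ∀ t : ℝ, 0 < t → φ' t = derivWithin φ (Set.Iic t) t)
    (hφ'zero : φ' 0 = derivWithin φ (Set.Ici 0) 0)
    (m : ℕ) (hm : 1 ≤ m) (t : ℝ) (ht : 0 ≤ t) :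
    (φ' t / m) * F m t ≤ F (m - 1) t := by
  have hF_nonneg (k : ℕ) : 0 ≤ F k t := by
    rw [hF]
    refine setIntegral_nonneg measurableSet_Ioi fun r (hr : t < r) => ?_
    have : 0 ≤ r - t := sub_nonneg.2 hr.le
    positivity
  rcases le_or_gt (φ' t) 0 with hc | hc
  · exact (mul_nonpos_of_nonpos_of_nonneg (div_nonpos_of_nonpos_of_nonneg hc m.cast_nonneg)
      (hF_nonneg m)).trans (hF_nonneg _)
  have hslope : ∀ b ∈ Ici (0 : ℝ), t < b → φ' t ≤ slope φ t b := by
    intro b hb htb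
    rcases ht.eq_or_lt with rfl | ht
    · rw [hφ'zero] at hc ⊢
      exact hconv.derivWithin_le_slope self_mem_Ici hb htb
        (differentiableWithinAt_of_derivWithin_ne_zero hc.ne')
    · rw [hφ'pos t ht]
      exact hconv.leftDeriv_Iic_le_slope_of_mem_interior (by simpa using ht) hb htb
  have hmono := (hconv.monotoneOn_sub_mul_of_le_slope ht hslope).mono
    fun r (hr : t ≤ r) => ⟨ht.trans hr, hr⟩
  obtain ⟨n, rfl⟩ := Nat.exists_eq_add_of_le' hm
  rw [hF, hF, Nat.add_sub_cancel, div_mul_eq_mul_div, div_le_iff₀ (by positivity),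
    mul_comm _ ((n + 1 : ℕ) : ℝ)]
  push_cast
  exact mul_integral_sub_pow_succ_mul_exp_neg_le hc hmono n

theorem stmt8 (φ : ℝ → ℝ)
    (hmono : MonotoneOn φ (Set.Ici 0))
    (hconv : ConvexOn ℝ (Set.Ici 0) φ)
    (hnonneg : ∀ t ∈ Set.Ici (0 : ℝ), 0 ≤ φ t)
    (hnc : ∃ s t : ℝ, 0 ≤ s ∧ 0 ≤ t ∧ φ s ≠ φ t)
    (F : ℕ → ℝ → ℝ)
    (hF : ∀ m t, F m t = ∫ r in Set.Ioi t, (r - t) ^ m * Real.exp (-φ r))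
    (φ' : ℝ → ℝ)
    (hφ'pos : ∀ t : ℝ, 0 < t → φ' t = derivWithin φ (Set.Iic t) t)
    (hφ'zero : φ' 0 = derivWithin φ (Set.Ici 0) 0)
    (m : ℕ) (hm : 1 ≤ m) (t : ℝ) (ht : 0 ≤ t) :
    (φ' t / m) * F m t ≤ F (m - 1) t :=
  stmt8_general φ hconv F hF φ' hφ'pos hφ'zero m hm t ht
end

section
/- Let n ≥ 2, let φ : [0,∞) → [0,∞) be an increasing, convex, non-constant function, and let μ be the measure on ℝⁿ with density x ↦ e^{-φ(|x|)}. Let R > 0 and let P = {x ∈ ℝⁿ : |⟨x, e_n⟩| ≤ R} be the plank of width 2R. Then for every t > 0, μ((tP)^c) ≥ (2|𝕊^{n-2}|/(n-1)) · ∫_{tR}^∞ (z - tR)^{n-1} e^{-φ(z)} dz, where |𝕊^{n-2}| denotes the (n-2)-dimensional surface measure of the unit sphere in ℝ^{n-1}. -/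
/-!
Split `x = (y, a)` with `a = ⟪x, e_n⟫`. Since `φ` is increasing and `‖x‖ ≤ |a| + ‖y‖`, the density
`e^{-φ ‖x‖}` dominates `e^{-φ (|a| + ‖y‖)}`. Integrating in polar coordinates in `y` and
substituting `z = |a| + ‖y‖` bounds `μ((tP)ᶜ)` from below by
`2 |𝕊^{n-2}| ∫_{tR}^∞ ∫_a^∞ (z - a)^{n-2} e^{-φ z} dz da`, and exchanging the order of integration
gives the claim because `∫_{tR}^z (z - a)^{n-2} da = (z - tR)^{n-1} / (n - 1)`.
-/

open MeasureTheory Set Metric Pointwise RealInnerProductSpace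
open scoped ENNReal

theorem ofReal_integral_le_lintegral_ofReal {α : Type*} [MeasurableSpace α] {μ : Measure α}
    {f : α → ℝ} (hf : 0 ≤ᵐ[μ] f) :
    ENNReal.ofReal (∫ x, f x ∂μ) ≤ ∫⁻ x, ENNReal.ofReal (f x) ∂μ :=
  calc ENNReal.ofReal (∫ x, f x ∂μ) ≤ ‖∫ x, f x ∂μ‖ₑ := Real.ofReal_le_enorm _
    _ ≤ ∫⁻ x, ‖f x‖ₑ ∂μ := enorm_integral_le_lintegral_enorm f
    _ = ∫⁻ x, ENNReal.ofReal (f x) ∂μ :=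
      lintegral_congr_ae <| hf.mono fun _ hx => Real.enorm_of_nonneg hx

theorem smul_setOf_abs_inner_le {E : Type*} [NormedAddCommGroup E] [InnerProductSpace ℝ E]
    (v : E) {t : ℝ} (ht : 0 < t) (R : ℝ) :
    t • {x : E | |⟪x, v⟫| ≤ R} = {x | |⟪x, v⟫| ≤ t * R} := by
  ext x
  rw [mem_smul_set_iff_inv_smul_mem₀ ht.ne']
  simp [inner_smul_left, abs_mul, abs_of_pos ht, inv_mul_le_iff₀ ht]

theorem compl_smul_setOf_abs_inner_single_le {m : ℕ} (i : Fin m) {t : ℝ} (ht : 0 < t) (R : ℝ) :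
    (t • {x : EuclideanSpace ℝ (Fin m) | |⟪x, EuclideanSpace.single i 1⟫| ≤ R})ᶜ
      = {x | t * R < |x i|} := by
  rw [smul_setOf_abs_inner_le _ ht]
  ext x
  simp [EuclideanSpace.inner_single_right]

theorem lintegral_fun_norm_addHaar {E : Type*} [NormedAddCommGroup E] [NormedSpace ℝ E]
    [MeasurableSpace E] [BorelSpace E] [FiniteDimensional ℝ E] [Nontrivial E] (μ : Measure E)
    [μ.IsAddHaarMeasure] {f : ℝ → ℝ≥0∞} (hf : Measurable f) :
    ∫⁻ x, f ‖x‖ ∂μ = μ.toSphere univ *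
      ∫⁻ r in Ioi (0 : ℝ), ENNReal.ofReal (r ^ (Module.finrank ℝ E - 1)) * f r := by
  calc ∫⁻ x, f ‖x‖ ∂μ = ∫⁻ x : ({(0)}ᶜ : Set E), f ‖x.1‖ ∂(μ.comap (↑)) := by
        rw [lintegral_subtype_comap (measurableSet_singleton _).compl fun x => f ‖x‖,
          restrict_compl_singleton]
    _ = ∫⁻ p, f p.2 ∂μ.toSphere.prod (.volumeIoiPow (Module.finrank ℝ E - 1)) := by
        simpa using μ.measurePreserving_homeomorphUnitSphereProd.lintegral_comp_emb
          (Homeomorph.measurableEmbedding _) (f ∘ Subtype.val ∘ Prod.snd)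
    _ = μ.toSphere univ * ∫⁻ r, f r ∂.volumeIoiPow (Module.finrank ℝ E - 1) := by
        have hf' : Measurable fun p : sphere (0 : E) 1 × Ioi (0 : ℝ) => f p.2 :=
          hf.comp (measurable_subtype_coe.comp measurable_snd)
        rw [lintegral_prod _ hf'.aemeasurable]
        simp only [lintegral_const, mul_comm]
    _ = _ := by
        rw [Measure.volumeIoiPow, lintegral_withDensity_eq_lintegral_mul _
          (measurable_subtype_coe.pow_const _).ennreal_ofReal
          (show Measurable fun r : Ioi (0 : ℝ) => f r from hf.comp measurable_subtype_coe)]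
        exact congrArg _ (lintegral_subtype_comap measurableSet_Ioi
          fun r => ENNReal.ofReal (r ^ (Module.finrank ℝ E - 1)) * f r)

theorem setLIntegral_setOf_lt_abs_comp_abs {c : ℝ} (hc : 0 ≤ c) (g : ℝ → ℝ≥0∞) :
    ∫⁻ a in {a : ℝ | c < |a|}, g |a| = 2 * ∫⁻ a in Ioi c, g a := by
  have hsplit : {a : ℝ | c < |a|} = Iio (-c) ∪ Ioi c := by
    ext a
    simp only [mem_ofPred_eq, mem_union, mem_Iio, mem_Ioi, lt_abs, lt_neg, or_comm]
  have hneg : ∫⁻ a in Iio (-c), g |a| = ∫⁻ a in Ioi c, g |a| := by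
    have := (Measure.measurePreserving_neg (volume : Measure ℝ)).setLIntegral_comp_preimage_emb
      measurableEmbedding_neg (fun a => g |a|) (Iio (-c))
    simpa only [abs_neg, neg_preimage, neg_Iio, neg_neg] using this.symm
  have habs : ∫⁻ a in Ioi c, g |a| = ∫⁻ a in Ioi c, g a :=
    setLIntegral_congr_fun measurableSet_Ioi fun a ha => by
      rw [abs_of_pos (hc.trans_lt ha)]
  have hdisj : Disjoint (Iio (-c)) (Ioi c) :=
    (Iic_disjoint_Ioi (neg_le_self hc)).mono_left Iio_subset_Iic_self
  rw [hsplit, lintegral_union measurableSet_Ioi hdisj, hneg, habs, two_mul]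

theorem setLIntegral_Ioi_zero_comp_add_right (a : ℝ) (g : ℝ → ℝ≥0∞) :
    ∫⁻ r in Ioi 0, g (r + a) = ∫⁻ z in Ioi a, g z := by
  have := (measurePreserving_add_right (volume : Measure ℝ) a).setLIntegral_comp_preimage_emb
    (measurableEmbedding_addRight a) g (Ioi a)
  simpa only [preimage_add_const_Ioi, sub_self] using this

theorem setLIntegral_Ioo_ofReal_sub_pow {c z : ℝ} (hcz : c ≤ z) (k : ℕ) :
    ∫⁻ a in Ioo c z, ENNReal.ofReal ((z - a) ^ k)
      = ENNReal.ofReal ((z - c) ^ (k + 1) / (k + 1)) := by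
  have hint : IntegrableOn (fun a => (z - a) ^ k) (Ioc c z) :=
    (continuous_const.sub continuous_id).pow k |>.integrableOn_Icc.mono_set Ioc_subset_Icc_self
  rw [Measure.restrict_congr_set Ioo_ae_eq_Ioc, ← ofReal_integral_eq_lintegral_ofReal hint
    (ae_restrict_of_forall_mem measurableSet_Ioc fun a ha => pow_nonneg (sub_nonneg.2 ha.2) k),
    ← intervalIntegral.integral_of_le hcz, intervalIntegral.integral_comp_sub_left (· ^ k) z]
  simp

theorem setLIntegral_Ioi_setLIntegral_Ioi_swap {F : ℝ → ℝ → ℝ≥0∞}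
    (hF : Measurable (Function.uncurry F)) (c : ℝ) :
    ∫⁻ a in Ioi c, ∫⁻ z in Ioi a, F a z = ∫⁻ z in Ioi c, ∫⁻ a in Ioo c z, F a z := by
  have hG : Measurable (Function.uncurry fun a z => if a < z then F a z else 0) :=
    Measurable.ite (measurableSet_lt measurable_fst measurable_snd) hF measurable_const
  have hinner : ∀ z, ∫⁻ a in Ioi c, (if a < z then F a z else 0) = ∫⁻ a in Ioo c z, F a z := by
    intro z
    rw [← Iio_inter_Ioi, ← Measure.restrict_restrict measurableSet_Iio,
      ← lintegral_indicator measurableSet_Iio]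
    rfl
  have hsupp : (Function.support fun z => ∫⁻ a in Ioo c z, F a z) ⊆ Ioi c := by
    intro z hz
    by_contra hzc
    refine hz (show ∫⁻ a in Ioo c z, F a z = 0 from ?_)
    rw [Ioo_eq_empty (by simpa using hzc), Measure.restrict_empty, lintegral_zero_measure]
  calc ∫⁻ a in Ioi c, ∫⁻ z in Ioi a, F a z
      = ∫⁻ a in Ioi c, ∫⁻ z, (if a < z then F a z else 0) :=
        lintegral_congr fun a => (lintegral_indicator measurableSet_Ioi _).symm
    _ = ∫⁻ z, ∫⁻ a in Ioi c, (if a < z then F a z else 0) :=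
        lintegral_lintegral_swap hG.aemeasurable
    _ = ∫⁻ z in Ioi c, ∫⁻ a in Ioo c z, F a z := by
        simp only [hinner]
        exact (setLIntegral_eq_of_support_subset hsupp).symm

theorem setLIntegral_Ioi_setLIntegral_Ioi_pow_mul_comp_add {Q : ℝ → ℝ≥0∞} (hQ : Measurable Q)
    (k : ℕ) (c : ℝ) :
    ∫⁻ a in Ioi c, ∫⁻ r in Ioi 0, ENNReal.ofReal (r ^ k) * Q (r + a)
      = ∫⁻ z in Ioi c, ENNReal.ofReal ((z - c) ^ (k + 1) / (k + 1)) * Q z := by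
  have hF : Measurable (Function.uncurry fun a z => ENNReal.ofReal ((z - a) ^ k) * Q z) :=
    ((measurable_snd.sub measurable_fst).pow_const k).ennreal_ofReal.mul (hQ.comp measurable_snd)
  calc ∫⁻ a in Ioi c, ∫⁻ r in Ioi 0, ENNReal.ofReal (r ^ k) * Q (r + a)
      = ∫⁻ a in Ioi c, ∫⁻ z in Ioi a, ENNReal.ofReal ((z - a) ^ k) * Q z :=
        lintegral_congr fun a => by
          simpa only [add_sub_cancel_right] using setLIntegral_Ioi_zero_comp_add_right a
            fun z => ENNReal.ofReal ((z - a) ^ k) * Q z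
    _ = ∫⁻ z in Ioi c, ∫⁻ a in Ioo c z, ENNReal.ofReal ((z - a) ^ k) * Q z :=
        setLIntegral_Ioi_setLIntegral_Ioi_swap hF c
    _ = _ := setLIntegral_congr_fun measurableSet_Ioi fun z hz => by
        rw [lintegral_mul_const _ (show Measurable fun a : ℝ => ENNReal.ofReal ((z - a) ^ k) from
            ((measurable_const.sub measurable_id).pow_const k).ennreal_ofReal),
          setLIntegral_Ioo_ofReal_sub_pow (le_of_lt hz)]

namespace EuclideanSpace

def splitLast (m : ℕ) : EuclideanSpace ℝ (Fin (m + 1)) ≃ᵐ ℝ × EuclideanSpace ℝ (Fin m) :=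
  (MeasurableEquiv.toLp 2 _).symm.trans <|
    (MeasurableEquiv.piFinSuccAbove (fun _ => ℝ) (Fin.last m)).trans <|
      (MeasurableEquiv.refl ℝ).prodCongr (MeasurableEquiv.toLp 2 _)

theorem measurePreserving_splitLast (m : ℕ) : MeasurePreserving (splitLast m) :=
  ((MeasurePreserving.id volume).prod (PiLp.volume_preserving_toLp (Fin m))).comp <|
    (volume_preserving_piFinSuccAbove (fun _ => ℝ) (Fin.last m)).comp <|
      PiLp.volume_preserving_ofLp (Fin (m + 1))

variable {m : ℕ}

theorem splitLast_snd_apply (x : EuclideanSpace ℝ (Fin (m + 1))) (j : Fin m) :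
    (splitLast m x).2 j = x j.castSucc :=
  congrArg x (congrFun Fin.succAbove_last j)

theorem norm_sq_eq_sq_add_norm_splitLast_snd_sq (x : EuclideanSpace ℝ (Fin (m + 1))) :
    ‖x‖ ^ 2 = x (Fin.last m) ^ 2 + ‖(splitLast m x).2‖ ^ 2 := by
  simp only [real_norm_sq_eq, Fin.sum_univ_castSucc, splitLast_snd_apply]
  ring

theorem norm_le_abs_add_norm_splitLast_snd (x : EuclideanSpace ℝ (Fin (m + 1))) :
    ‖x‖ ≤ |x (Fin.last m)| + ‖(splitLast m x).2‖ := by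
  refine le_of_pow_le_pow_left₀ two_ne_zero (by positivity) ?_
  rw [norm_sq_eq_sq_add_norm_splitLast_snd_sq, add_sq, sq_abs]
  nlinarith [abs_nonneg (x (Fin.last m)), norm_nonneg (splitLast m x).2]

end EuclideanSpace

open EuclideanSpace in
theorem setLIntegral_lintegral_le_setLIntegral_last_mem {m : ℕ} {Q : ℝ → ℝ≥0∞} (hQ : Antitone Q)
    {s : Set ℝ} (hs : MeasurableSet s) :
    ∫⁻ a in s, ∫⁻ y : EuclideanSpace ℝ (Fin m), Q (|a| + ‖y‖)
      ≤ ∫⁻ x in {x : EuclideanSpace ℝ (Fin (m + 1)) | x (Fin.last m) ∈ s}, Q ‖x‖ := by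
  have hmeas : Measurable fun p : ℝ × EuclideanSpace ℝ (Fin m) => Q (|p.1| + ‖p.2‖) :=
    hQ.measurable.comp (measurable_fst.abs.add measurable_snd.norm)
  calc ∫⁻ a in s, ∫⁻ y : EuclideanSpace ℝ (Fin m), Q (|a| + ‖y‖)
      = ∫⁻ p in s ×ˢ univ, Q (|p.1| + ‖p.2‖) := by
        rw [Measure.volume_eq_prod, setLIntegral_prod _ hmeas.aemeasurable, Measure.restrict_univ]
    _ = ∫⁻ x in splitLast m ⁻¹' (s ×ˢ univ), Q (|(splitLast m x).1| + ‖(splitLast m x).2‖) :=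
        ((measurePreserving_splitLast m).setLIntegral_comp_preimage (hs.prod .univ) hmeas).symm
    _ ≤ _ := by
        rw [prod_univ]
        exact setLIntegral_mono' (measurable_fst.comp (measurePreserving_splitLast m).measurable hs)
          fun x _ => hQ (norm_le_abs_add_norm_splitLast_snd x)

theorem two_mul_toSphere_mul_le_setLIntegral_lt_abs_last (k : ℕ) {Q : ℝ → ℝ≥0∞}
    (hQ : Antitone Q) {c : ℝ} (hc : 0 ≤ c) :
    2 * (volume : Measure (EuclideanSpace ℝ (Fin (k + 1)))).toSphere univ *
        ∫⁻ z in Ioi c, ENNReal.ofReal ((z - c) ^ (k + 1) / (k + 1)) * Q z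
      ≤ ∫⁻ x in {x : EuclideanSpace ℝ (Fin (k + 2)) | c < |x (Fin.last (k + 1))|}, Q ‖x‖ := by
  have hpolar (a : ℝ) : ∫⁻ y : EuclideanSpace ℝ (Fin (k + 1)), Q (a + ‖y‖)
      = (volume : Measure (EuclideanSpace ℝ (Fin (k + 1)))).toSphere univ *
        ∫⁻ r in Ioi 0, ENNReal.ofReal (r ^ k) * Q (r + a) := by
    rw [lintegral_fun_norm_addHaar _ (f := fun r => Q (a + r))
      (hQ.measurable.comp (measurable_const_add a)), finrank_euclideanSpace_fin, Nat.add_sub_cancel]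
    simp_rw [add_comm a]
  set σ := (volume : Measure (EuclideanSpace ℝ (Fin (k + 1)))).toSphere univ
  calc 2 * σ * ∫⁻ z in Ioi c, ENNReal.ofReal ((z - c) ^ (k + 1) / (k + 1)) * Q z
      = 2 * ∫⁻ a in Ioi c, σ * ∫⁻ r in Ioi 0, ENNReal.ofReal (r ^ k) * Q (r + a) := by
        rw [lintegral_const_mul' _ _ (measure_ne_top _ _),
          setLIntegral_Ioi_setLIntegral_Ioi_pow_mul_comp_add hQ.measurable, mul_assoc]
    _ = 2 * ∫⁻ a in Ioi c, ∫⁻ y : EuclideanSpace ℝ (Fin (k + 1)), Q (a + ‖y‖) := by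
        simp_rw [hpolar]
    _ = ∫⁻ a in {a | c < |a|}, ∫⁻ y : EuclideanSpace ℝ (Fin (k + 1)), Q (|a| + ‖y‖) :=
        (setLIntegral_setOf_lt_abs_comp_abs hc _).symm
    _ ≤ _ := setLIntegral_lintegral_le_setLIntegral_last_mem hQ
        (measurableSet_lt measurable_const measurable_abs)

theorem stmt11 (n : ℕ) (hn : 2 ≤ n)
    (φ : ℝ → ℝ)
    (hmono : MonotoneOn φ (Set.Ici 0))
    (μ : Measure (EuclideanSpace ℝ (Fin n)))
    (hμ : μ = volume.withDensity fun x => ENNReal.ofReal (Real.exp (-φ ‖x‖)))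
    (R : ℝ) (hR : 0 < R)
    (en : EuclideanSpace ℝ (Fin n))
    (hen : en = EuclideanSpace.single (⟨n - 1, by omega⟩ : Fin n) (1 : ℝ))
    (P : Set (EuclideanSpace ℝ (Fin n)))
    (hP : P = {x | |⟪x, en⟫| ≤ R})
    (S : ℝ)
    (hS : S = ((volume : Measure (EuclideanSpace ℝ (Fin (n - 1)))).toSphere
        (Set.univ : Set (Metric.sphere (0 : EuclideanSpace ℝ (Fin (n - 1))) 1))).toReal)
    (t : ℝ) (ht : 0 < t) :
    ENNReal.ofReal
        ((2 * S / (n - 1)) * ∫ z in Set.Ioi (t * R), (z - t * R) ^ (n - 1) * Real.exp (-φ z))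
      ≤ μ (t • P)ᶜ := by
  obtain ⟨k, rfl⟩ : ∃ k, n = k + 2 := ⟨n - 2, by omega⟩
  set c := t * R
  have hc : 0 ≤ c := (mul_pos ht hR).le
  -- clamping at `0` makes `Q` antitone on all of `ℝ`; it agrees with `e^{-φ}` on `[0, ∞)`
  set Q : ℝ → ℝ≥0∞ := fun s => ENNReal.ofReal (Real.exp (-φ (max s 0)))
  have hQ : Antitone Q := fun s u hsu => ENNReal.ofReal_le_ofReal <| Real.exp_le_exp.2 <|
    neg_le_neg <| hmono (le_max_right s 0) (le_max_right u 0) (max_le_max_right 0 hsu)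
  have hμP : μ (t • P)ᶜ
      = ∫⁻ x in {x : EuclideanSpace ℝ (Fin (k + 2)) | c < |x (Fin.last (k + 1))|}, Q ‖x‖ := by
    rw [hP, hen, compl_smul_setOf_abs_inner_single_le _ ht, hμ,
      withDensity_apply _ (measurableSet_lt measurable_const (by fun_prop))]
    exact lintegral_congr fun x => by simp only [Q, max_eq_left (norm_nonneg x)]
  have hσ : ENNReal.ofReal (2 * S)
      = 2 * (volume : Measure (EuclideanSpace ℝ (Fin (k + 1)))).toSphere univ := by
    rw [ENNReal.ofReal_mul zero_le_two, ENNReal.ofReal_ofNat, hS,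
      ENNReal.ofReal_toReal (measure_ne_top _ _)]
  have hS0 : 0 ≤ 2 * S := mul_nonneg zero_le_two (hS ▸ ENNReal.toReal_nonneg)
  rw [hμP, show ((k + 2 : ℕ) : ℝ) - 1 = k + 1 by push_cast; ring, show k + 2 - 1 = k + 1 from rfl,
    ← integral_const_mul]
  calc ENNReal.ofReal (∫ z in Ioi c, 2 * S / (k + 1) * ((z - c) ^ (k + 1) * Real.exp (-φ z)))
      ≤ ∫⁻ z in Ioi c, ENNReal.ofReal (2 * S / (k + 1) * ((z - c) ^ (k + 1) * Real.exp (-φ z))) :=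
        ofReal_integral_le_lintegral_ofReal <| ae_restrict_of_forall_mem measurableSet_Ioi
          fun z (hz : c < z) => by have := sub_nonneg.2 hz.le; positivity
    _ = 2 * (volume : Measure (EuclideanSpace ℝ (Fin (k + 1)))).toSphere univ *
          ∫⁻ z in Ioi c, ENNReal.ofReal ((z - c) ^ (k + 1) / (k + 1)) * Q z := by
        rw [← hσ, ← lintegral_const_mul' _ _ ENNReal.ofReal_ne_top]
        refine setLIntegral_congr_fun measurableSet_Ioi fun z (hz : c < z) => ?_
        have hdens : 0 ≤ (z - c) ^ (k + 1) / (k + 1) := by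
          have := sub_nonneg.2 hz.le; positivity
        simp only [Q, max_eq_left (hc.trans hz.le)]
        rw [← ENNReal.ofReal_mul hdens, ← ENNReal.ofReal_mul hS0]
        ring_nf
    _ ≤ _ := two_mul_toSphere_mul_le_setLIntegral_lt_abs_last k hQ hc
end

section
/- Let n ≥ 2, let K, L ⊂ ℝⁿ be convex symmetric bodies, let ‖x‖_L = min{λ > 0 : x ∈ λL} be the Minkowski functional of L, let φ : [0,∞) → [0,∞) be an increasing, convex, non-constant function, and let μ be the probability measure with density x ↦ e^{-φ(‖x‖_L)}. Let R > 0 and suppose there exists t₀ > 0 such that μ(tRL) ≤ μ(tK) for all t ≥ t₀. Then RL ⊆ K. -/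
open MeasureTheory Filter Set Pointwise
open scoped Topology

set_option maxHeartbeats 1000000 in
theorem stmt15 (n : ℕ) (hn : 2 ≤ n)
    (K L : Set (EuclideanSpace ℝ (Fin n)))
    (hKcomp : IsCompact K) (hKconv : Convex ℝ K)
    (hKint : (interior K).Nonempty) (hKsymm : K = -K)
    (hLcomp : IsCompact L) (hLconv : Convex ℝ L)
    (hLint : (interior L).Nonempty) (hLsymm : L = -L)
    (φ : ℝ → ℝ)
    (hmono : MonotoneOn φ (Set.Ici 0))
    (hconv : ConvexOn ℝ (Set.Ici 0) φ)
    (hnonneg : ∀ t ∈ Set.Ici (0 : ℝ), 0 ≤ φ t)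
    (hnc : ∃ s t : ℝ, 0 ≤ s ∧ 0 ≤ t ∧ φ s ≠ φ t)
    (μ : Measure (EuclideanSpace ℝ (Fin n)))
    (hμ : μ = volume.withDensity fun x => ENNReal.ofReal (Real.exp (-φ (gauge L x))))
    (hprob : IsProbabilityMeasure μ)
    (R : ℝ) (hR : 0 < R)
    (t₀ : ℝ) (ht₀ : 0 < t₀)
    (h : ∀ t ≥ t₀, μ ((t * R) • L) ≤ μ (t • K)) :
    R • L ⊆ K := by
  intro x₀ hx₀
  by_contra hx₀K
  have hKcl : IsClosed K := hKcomp.isClosed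
  have hLcl : IsClosed L := hLcomp.isClosed
  -- 0 is in the interior of any symmetric convex set with nonempty interior
  have zero_int : ∀ S : Set (EuclideanSpace ℝ (Fin n)), Convex ℝ S → S = -S →
      (interior S).Nonempty → (0 : EuclideanSpace ℝ (Fin n)) ∈ interior S := by
    rintro S hconvS hsymmS ⟨y, hy⟩
    have hy' : -y ∈ interior S := by
      have hi : interior S = -interior S := by
        conv_lhs => rw [hsymmS]
        rw [show -S = (-1:ℝ) • S by rw [neg_smul_set, one_smul],
          interior_smul₀ (by norm_num : (-1:ℝ) ≠ 0), neg_smul_set, one_smul]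
      rw [hi]
      exact Set.neg_mem_neg.mpr hy
    have := hconvS.interior hy hy' (by norm_num : (0:ℝ) ≤ 1/2)
      (by norm_num : (0:ℝ) ≤ 1/2) (by norm_num)
    simpa [smul_neg] using this
  have hK0i := zero_int K hKconv hKsymm hKint
  have hL0i := zero_int L hLconv hLsymm hLint
  have hK0 : (0 : EuclideanSpace ℝ (Fin n)) ∈ K := interior_subset hK0i
  have hL0 : (0 : EuclideanSpace ℝ (Fin n)) ∈ L := interior_subset hL0i
  have hLnhds : L ∈ 𝓝 (0 : EuclideanSpace ℝ (Fin n)) := mem_interior_iff_mem_nhds.mp hL0i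
  have habs : Absorbent ℝ L := absorbent_nhds_zero hLnhds
  have hbdd : Bornology.IsVonNBounded ℝ L :=
    (NormedSpace.isVonNBounded_iff ℝ).mpr hLcomp.isBounded
  -- membership from gauge bound
  have mem_smul : ∀ (r : ℝ) (y : EuclideanSpace ℝ (Fin n)), 0 < r → gauge L y < r →
      y ∈ r • L := by
    intro r y hr hy
    have h1 : gauge L (r⁻¹ • y) < 1 := by
      rw [gauge_smul_of_nonneg (by positivity : (0:ℝ) ≤ r⁻¹), smul_eq_mul]
      have := (div_lt_one hr).mpr hy
      rw [div_eq_inv_mul] at this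
      exact this
    have h2 : r⁻¹ • y ∈ L :=
      gauge_lt_one_subset_self hLconv hL0 habs (show r⁻¹ • y ∈ {x | gauge L x < 1} from h1)
    exact ⟨r⁻¹ • y, h2, smul_inv_smul₀ hr.ne' y⟩
  have hg0le : gauge L x₀ ≤ R := gauge_le_of_mem hR.le hx₀
  have hx₀ne : x₀ ≠ 0 := fun hh => hx₀K (hh ▸ hK0)
  have hg0pos : 0 < gauge L x₀ := (gauge_pos habs hbdd).mpr hx₀ne
  -- find c ∈ (0,1) with c • x₀ ∉ K
  have hev1 : ∀ᶠ c : ℝ in 𝓝[<] (1:ℝ), c • x₀ ∈ Kᶜ := by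
    apply eventually_nhdsWithin_of_eventually_nhds
    have hcont : ContinuousAt (fun c : ℝ => c • x₀) 1 :=
      (continuous_id.smul continuous_const).continuousAt
    exact hcont.eventually_mem (hKcl.isOpen_compl.mem_nhds (by simpa using hx₀K))
  have hev2 : ∀ᶠ c : ℝ in 𝓝[<] (1:ℝ), c ∈ Set.Ioo (0:ℝ) 1 :=
    Filter.eventually_mem_set.mpr (Ioo_mem_nhdsLT_of_mem (by norm_num))
  obtain ⟨c, hcK, hc0, hc1⟩ := (hev1.and hev2).exists
  set x₁ := c • x₀ with hx₁def
  have hg₁ : gauge L x₁ = c * gauge L x₀ := by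
    rw [hx₁def, gauge_smul_of_nonneg hc0.le, smul_eq_mul]
  have hg₁ltR : gauge L x₁ < R := by
    rw [hg₁]; nlinarith
  set R' : ℝ := (gauge L x₁ + R) / 2 with hR'def
  have hgnn : 0 ≤ gauge L x₁ := gauge_nonneg _
  have hR'pos : 0 < R' := by rw [hR'def]; linarith
  have hR'ltR : R' < R := by rw [hR'def]; linarith
  have hg₁ltR' : gauge L x₁ < R' := by rw [hR'def]; linarith
  -- the open set U
  set U : Set (EuclideanSpace ℝ (Fin n)) := {x | gauge L x < R'} ∩ Kᶜ with hUdef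
  have hUopen : IsOpen U :=
    (isOpen_lt (continuous_gauge hLconv hLnhds) continuous_const).inter hKcl.isOpen_compl
  have hx₁U : x₁ ∈ U := ⟨hg₁ltR', hcK⟩
  have hUsub : U ⊆ R • L := fun y hy => mem_smul R y hR (lt_trans hy.1 hR'ltR)
  have hUK : U ∩ K = ∅ := Set.eq_empty_iff_forall_notMem.mpr fun y hy => hy.1.2 hy.2
  have hUvol : 0 < volume U := hUopen.measure_pos volume ⟨x₁, hx₁U⟩
  have hRLcomp : IsCompact (R • L) := hLcomp.smul R
  have hUfin : volume U ≠ ⊤ :=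
    ((measure_mono hUsub).trans_lt hRLcomp.measure_lt_top).ne
  have hVU : 0 < (volume U).toReal := ENNReal.toReal_pos hUvol.ne' hUfin
  -- slope constant
  obtain ⟨s₁, s₂, hs₁, hs₂, hne⟩ := hnc
  obtain ⟨a, b, ha0, hab, hφab⟩ : ∃ a b : ℝ, 0 ≤ a ∧ a < b ∧ φ a < φ b := by
    rcases lt_trichotomy s₁ s₂ with h' | h' | h'
    · exact ⟨s₁, s₂, hs₁, h', lt_of_le_of_ne (hmono hs₁ hs₂ h'.le) hne⟩
    · exact absurd (by rw [h']) hne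
    · exact ⟨s₂, s₁, hs₂, h', lt_of_le_of_ne (hmono hs₂ hs₁ h'.le) (Ne.symm hne)⟩
  set c₀ : ℝ := (φ b - φ a) / (b - a) with hc₀def
  have hc₀pos : 0 < c₀ := div_pos (by linarith) (by linarith)
  have hb0 : (0:ℝ) ≤ b := le_trans ha0 hab.le
  have hslope : ∀ u v : ℝ, b ≤ u → u < v → c₀ * (v - u) ≤ φ v - φ u := by
    intro u v hbu huv
    have hu0 : (0:ℝ) ≤ u := le_trans hb0 hbu
    have hv0 : (0:ℝ) ≤ v := le_trans hu0 huv.le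
    have h1 : (φ b - φ a) / (b - a) ≤ (φ v - φ a) / (v - a) :=
      hconv.secant_mono ha0 hb0 hv0 (by linarith) (by linarith) (by linarith)
    have h2 : (φ a - φ v) / (a - v) ≤ (φ u - φ v) / (u - v) :=
      hconv.secant_mono hv0 ha0 hu0 (by linarith) (by linarith) (by linarith)
    have e1 : (φ a - φ v) / (a - v) = (φ v - φ a) / (v - a) := by
      rw [← neg_sub (φ v) (φ a), ← neg_sub v a, neg_div_neg_eq]
    have e2 : (φ u - φ v) / (u - v) = (φ v - φ u) / (v - u) := by
      rw [← neg_sub (φ v) (φ u), ← neg_sub v u, neg_div_neg_eq]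
    rw [e1, e2] at h2
    have h3 : c₀ ≤ (φ v - φ u) / (v - u) := le_trans h1 h2
    have := (le_div_iff₀ (by linarith : (0:ℝ) < v - u)).mp h3
    linarith
  -- choose a large t
  have hd : 0 < c₀ * (R - R') := mul_pos hc₀pos (by linarith)
  have htend : Tendsto (fun t : ℝ => Real.exp (-(c₀ * (R - R') * t)) * (volume K).toReal)
      atTop (𝓝 0) := by
    have h1 : Tendsto (fun t : ℝ => c₀ * (R - R') * t) atTop atTop :=
      Tendsto.const_mul_atTop hd tendsto_id
    have h2 := Real.tendsto_exp_neg_atTop_nhds_zero.comp h1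
    simpa using h2.mul_const ((volume K).toReal)
  have hev : ∀ᶠ t : ℝ in atTop,
      Real.exp (-(c₀ * (R - R') * t)) * (volume K).toReal < (volume U).toReal :=
    htend.eventually (gt_mem_nhds hVU)
  obtain ⟨t, hteps, htt₀, htb⟩ :=
    (hev.and ((eventually_ge_atTop t₀).and (eventually_gt_atTop (b / R')))).exists
  have ht0 : 0 < t := lt_of_lt_of_le ht₀ htt₀
  have htR'b : b ≤ t * R' := by
    have := (div_lt_iff₀ hR'pos).mp htb
    linarith
  -- the main measure comparison
  set A : Set (EuclideanSpace ℝ (Fin n)) := (t * R) • L with hAdef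
  set B : Set (EuclideanSpace ℝ (Fin n)) := t • K with hBdef
  have hAcomp : IsCompact A := hLcomp.smul _
  have hBcomp : IsCompact B := hKcomp.smul _
  have hAmeas : MeasurableSet A := hAcomp.isClosed.measurableSet
  have hBmeas : MeasurableSet B := hBcomp.isClosed.measurableSet
  have hABle : μ A ≤ μ B := h t htt₀
  have key : μ (A \ B) ≤ μ (B \ A) := by
    have h1 : μ (A ∩ B) + μ (A \ B) = μ A := measure_inter_add_diff A hBmeas
    have h2 : μ (B ∩ A) + μ (B \ A) = μ B := measure_inter_add_diff B hAmeas
    have hfin : μ (A ∩ B) ≠ ⊤ := measure_ne_top μ _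
    rw [← h1, ← h2, Set.inter_comm B A] at hABle
    exact (ENNReal.add_le_add_iff_left hfin).mp hABle
  have htU_sub : t • U ⊆ A \ B := by
    have hdisj : t • U ∩ B = ∅ := by
      rw [hBdef, ← Set.smul_set_inter₀ ht0.ne', hUK, Set.smul_set_empty]
    intro y hy
    refine ⟨?_, fun hyB => ?_⟩
    · have h1 : t • U ⊆ t • (R • L) := Set.smul_set_mono hUsub
      have h2 : t • (R • L) = A := by rw [hAdef, mul_smul]
      rw [← h2]; exact h1 hy
    · exact absurd (Set.mem_inter hy hyB) (by rw [hdisj]; exact Set.notMem_empty y)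
  have htUmeas : MeasurableSet (t • U) := (hUopen.smul₀ ht0.ne').measurableSet
  -- lower bound for μ (t • U)
  have hlow : ENNReal.ofReal (Real.exp (-φ (t * R'))) * volume (t • U) ≤ μ (t • U) := by
    rw [hμ, withDensity_apply _ htUmeas, ← setLIntegral_const]
    apply setLIntegral_mono' htUmeas
    rintro x ⟨u, hu, rfl⟩
    have hg : gauge L (t • u) ≤ t * R' := by
      rw [gauge_smul_of_nonneg ht0.le, smul_eq_mul]
      exact mul_le_mul_of_nonneg_left hu.1.le ht0.le
    have hφle : φ (gauge L (t • u)) ≤ φ (t * R') :=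
      hmono (Set.mem_Ici.mpr (gauge_nonneg _)) (Set.mem_Ici.mpr (by positivity)) hg
    exact ENNReal.ofReal_le_ofReal (Real.exp_le_exp.mpr (by linarith))
  -- upper bound for μ (B \ A)
  have hBAmeas : MeasurableSet (B \ A) := hBmeas.diff hAmeas
  have hup : μ (B \ A) ≤ ENNReal.ofReal (Real.exp (-φ (t * R))) * volume B := by
    rw [hμ, withDensity_apply _ hBAmeas]
    calc ∫⁻ x in B \ A, ENNReal.ofReal (Real.exp (-φ (gauge L x))) ∂volume
        ≤ ∫⁻ _x in B \ A, ENNReal.ofReal (Real.exp (-φ (t * R))) ∂volume := by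
          apply setLIntegral_mono' hBAmeas
          intro x hx
          have hge : t * R ≤ gauge L x := by
            by_contra hlt
            push_neg at hlt
            exact hx.2 (mem_smul (t * R) x (by positivity) hlt)
          have hφge : φ (t * R) ≤ φ (gauge L x) :=
            hmono (Set.mem_Ici.mpr (by positivity)) (Set.mem_Ici.mpr (gauge_nonneg _)) hge
          exact ENNReal.ofReal_le_ofReal (Real.exp_le_exp.mpr (by linarith))
      _ = ENNReal.ofReal (Real.exp (-φ (t * R))) * volume (B \ A) := setLIntegral_const _ _
      _ ≤ ENNReal.ofReal (Real.exp (-φ (t * R))) * volume B :=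
          mul_le_mul_right (measure_mono Set.diff_subset) _
  -- scaling of volumes
  have hfr : Module.finrank ℝ (EuclideanSpace ℝ (Fin n)) = n := finrank_euclideanSpace_fin
  have habs_t : |t ^ n| = t ^ n := abs_of_pos (pow_pos ht0 n)
  have hvolU : volume (t • U) = ENNReal.ofReal (t ^ n) * volume U := by
    rw [Measure.addHaar_smul volume t U, hfr, habs_t]
  have hvolB : volume B = ENNReal.ofReal (t ^ n) * volume K := by
    rw [hBdef, Measure.addHaar_smul volume t K, hfr, habs_t]
  -- chain of inequalities
  have chain : ENNReal.ofReal (Real.exp (-φ (t * R'))) * (ENNReal.ofReal (t ^ n) * volume U)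
      ≤ ENNReal.ofReal (Real.exp (-φ (t * R))) * (ENNReal.ofReal (t ^ n) * volume K) := by
    calc ENNReal.ofReal (Real.exp (-φ (t * R'))) * (ENNReal.ofReal (t ^ n) * volume U)
        = ENNReal.ofReal (Real.exp (-φ (t * R'))) * volume (t • U) := by rw [hvolU]
      _ ≤ μ (t • U) := hlow
      _ ≤ μ (A \ B) := measure_mono htU_sub
      _ ≤ μ (B \ A) := key
      _ ≤ ENNReal.ofReal (Real.exp (-φ (t * R))) * volume B := hup
      _ = _ := by rw [hvolB]
  -- pass to real numbers
  have hKfin : volume K ≠ ⊤ := hKcomp.measure_lt_top.ne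
  have hRHSfin : ENNReal.ofReal (Real.exp (-φ (t * R))) * (ENNReal.ofReal (t ^ n) * volume K)
      ≠ ⊤ := ENNReal.mul_ne_top ENNReal.ofReal_ne_top
        (ENNReal.mul_ne_top ENNReal.ofReal_ne_top hKfin)
  have hreal := ENNReal.toReal_mono hRHSfin chain
  rw [ENNReal.toReal_mul, ENNReal.toReal_mul, ENNReal.toReal_mul, ENNReal.toReal_mul,
    ENNReal.toReal_ofReal (Real.exp_nonneg _), ENNReal.toReal_ofReal (Real.exp_nonneg _),
    ENNReal.toReal_ofReal (pow_pos ht0 n).le] at hreal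
  -- the convexity lower bound on φ
  have hφbound : φ (t * R') + c₀ * (R - R') * t ≤ φ (t * R) := by
    have h1 := hslope (t * R') (t * R) htR'b (by nlinarith)
    have h2 : c₀ * (t * R - t * R') = c₀ * (R - R') * t := by ring
    linarith [h1, h2.le, h2.ge]
  have hE : Real.exp (-φ (t * R)) ≤
      Real.exp (-φ (t * R')) * Real.exp (-(c₀ * (R - R') * t)) := by
    rw [← Real.exp_add]
    exact Real.exp_le_exp.mpr (by linarith)
  -- final contradiction
  set VU := (volume U).toReal
  set VK := (volume K).toReal
  have hVK0 : (0:ℝ) ≤ VK := ENNReal.toReal_nonneg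
  have hP : (0:ℝ) < t ^ n := pow_pos ht0 n
  have hE1 : (0:ℝ) < Real.exp (-φ (t * R')) := Real.exp_pos _
  have hE3 : (0:ℝ) ≤ Real.exp (-(c₀ * (R - R') * t)) := (Real.exp_pos _).le
  have step1 : Real.exp (-φ (t * R)) * (t ^ n * VK) ≤
      (Real.exp (-φ (t * R')) * Real.exp (-(c₀ * (R - R') * t))) * (t ^ n * VK) :=
    mul_le_mul_of_nonneg_right hE (mul_nonneg hP.le hVK0)
  have hassoc : (Real.exp (-φ (t * R')) * Real.exp (-(c₀ * (R - R') * t))) * (t ^ n * VK)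
      = Real.exp (-φ (t * R')) * (Real.exp (-(c₀ * (R - R') * t)) * (t ^ n * VK)) :=
    mul_assoc _ _ _
  have step2 : Real.exp (-(c₀ * (R - R') * t)) * (t ^ n * VK) < t ^ n * VU := by
    have := mul_lt_mul_of_pos_left hteps hP
    nlinarith
  have step3 : Real.exp (-φ (t * R')) * (Real.exp (-(c₀ * (R - R') * t)) * (t ^ n * VK)) <
      Real.exp (-φ (t * R')) * (t ^ n * VU) := mul_lt_mul_of_pos_left step2 hE1
  linarith [hreal, step1, step3, hassoc.le, hassoc.ge]
end

section
/- Let n ≥ 1, let K, L ⊂ ℝⁿ be convex symmetric bodies, let ‖x‖_L = min{λ > 0 : x ∈ λL} be the Minkowski functional of L, let φ : [0,∞) → [0,∞) be an increasing function, and let μ be the measure with density x ↦ e^{-φ(‖x‖_L)}. If R > 0 and |K| ≤ |RL|, then μ(K) ≤ μ(RL). -/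
open MeasureTheory Filter Set Pointwise Topology

/-! A bathtub argument: the density `e^{-φ(‖x‖_L)}` is at least `e^{-φ(R)}` on `RL` and at most
`e^{-φ(R)}` off `RL`, so trading the part of `K` outside `RL` for the (no smaller) part of `RL`
outside `K` can only increase the measure. -/

section Bathtub

variable {α : Type*} [MeasurableSpace α] {ν : Measure α} {s t : Set α}

theorem measure_sdiff_le_measure_sdiff (hs : MeasurableSet s) (ht : MeasurableSet t)
    (hst : ν (s ∩ t) ≠ ⊤) (h : ν s ≤ ν t) : ν (s \ t) ≤ ν (t \ s) := by
  rw [← ENNReal.add_le_add_iff_right hst, measure_sdiff_add_inter s ht, inter_comm,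
    measure_sdiff_add_inter t hs]
  exact h

theorem withDensity_apply_le_of_measure_le {f : α → ENNReal} {c : ENNReal}
    (hs : MeasurableSet s) (ht : MeasurableSet t) (hst : ν (s ∩ t) ≠ ⊤) (h : ν s ≤ ν t)
    (hf_ge : ∀ x ∈ t, c ≤ f x) (hf_le : ∀ x ∉ t, f x ≤ c) :
    ν.withDensity f s ≤ ν.withDensity f t := by
  have hsdiff : ν.withDensity f (s \ t) ≤ ν.withDensity f (t \ s) := by
    rw [withDensity_apply _ (hs.diff ht), withDensity_apply _ (ht.diff hs)]
    calc ∫⁻ x in s \ t, f x ∂ν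
        ≤ ∫⁻ _ in s \ t, c ∂ν := setLIntegral_mono' (hs.diff ht) fun x hx => hf_le x hx.2
      _ = c * ν (s \ t) := setLIntegral_const _ _
      _ ≤ c * ν (t \ s) := mul_le_mul_right (measure_sdiff_le_measure_sdiff hs ht hst h) _
      _ = ∫⁻ _ in t \ s, c ∂ν := (setLIntegral_const _ _).symm
      _ ≤ ∫⁻ x in t \ s, f x ∂ν := setLIntegral_mono' (ht.diff hs) fun x hx => hf_ge x hx.1
  calc ν.withDensity f s = ν.withDensity f (s ∩ t) + ν.withDensity f (s \ t) :=
        (measure_inter_add_sdiff s ht).symm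
    _ ≤ ν.withDensity f (t ∩ s) + ν.withDensity f (t \ s) := by
        rw [inter_comm]; exact add_le_add_right hsdiff _
    _ = ν.withDensity f t := measure_inter_add_sdiff t hs

end Bathtub

theorem Convex.zero_mem_interior_of_neg_eq {E : Type*} [AddCommGroup E] [Module ℝ E]
    [TopologicalSpace E] [IsTopologicalAddGroup E] [ContinuousSMul ℝ E] {L : Set E}
    (hL : Convex ℝ L) (hLint : (interior L).Nonempty) (hLsymm : L = -L) :
    (0 : E) ∈ interior L := by
  obtain ⟨x, hx⟩ := hLint
  have hnx : -x ∈ interior L := by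
    refine interior_maximal (fun y hy => ?_) isOpen_interior.neg (neg_mem_neg.mpr hx)
    rw [hLsymm]
    exact interior_subset (s := L) hy
  have half : (0 : ℝ) ≤ 1 / 2 := by norm_num
  simpa using hL.interior hx hnx half half (by norm_num)

theorem stmt16_general (n : ℕ)
    (K L : Set (EuclideanSpace ℝ (Fin n)))
    (hKcomp : IsCompact K)
    (hLcomp : IsCompact L) (hLconv : Convex ℝ L)
    (hLint : (interior L).Nonempty) (hLsymm : L = -L)
    (φ : ℝ → ℝ)
    (hmono : MonotoneOn φ (Set.Ici 0))
    (μ : Measure (EuclideanSpace ℝ (Fin n)))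
    (hμ : μ = volume.withDensity fun x => ENNReal.ofReal (Real.exp (-φ (gauge L x))))
    (R : ℝ) (hR : 0 < R)
    (hvol : volume K ≤ volume (R • L)) :
    μ K ≤ μ (R • L) := by
  have hL0 : L ∈ 𝓝 0 :=
    mem_interior_iff_mem_nhds.mp (hLconv.zero_mem_interior_of_neg_eq hLint hLsymm)
  have hdensity_anti : ∀ ⦃a b : ℝ⦄, 0 ≤ a → a ≤ b →
      ENNReal.ofReal (Real.exp (-φ b)) ≤ ENNReal.ofReal (Real.exp (-φ a)) := fun a b ha hab =>
    ENNReal.ofReal_le_ofReal <| Real.exp_le_exp.mpr <| neg_le_neg <|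
      hmono ha (ha.trans hab) hab
  subst hμ
  refine withDensity_apply_le_of_measure_le (c := ENNReal.ofReal (Real.exp (-φ R)))
    hKcomp.isClosed.measurableSet (hLcomp.smul R).isClosed.measurableSet
    ((measure_mono inter_subset_right).trans_lt (hLcomp.smul R).measure_lt_top).ne hvol
    (fun x hx => hdensity_anti (gauge_nonneg x) (gauge_le_of_mem hR.le hx))
    (fun x hx => hdensity_anti hR.le ?_)
  exact le_gauge_of_notMem (hLconv.starConvex (mem_of_mem_nhds hL0))
    (absorbent_nhds_zero hL0 x) hx

theorem stmt16 (n : ℕ) (hn : 1 ≤ n)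
    (K L : Set (EuclideanSpace ℝ (Fin n)))
    (hKcomp : IsCompact K) (hKconv : Convex ℝ K)
    (hKint : (interior K).Nonempty) (hKsymm : K = -K)
    (hLcomp : IsCompact L) (hLconv : Convex ℝ L)
    (hLint : (interior L).Nonempty) (hLsymm : L = -L)
    (φ : ℝ → ℝ)
    (hmono : MonotoneOn φ (Set.Ici 0))
    (hnonneg : ∀ t ∈ Set.Ici (0 : ℝ), 0 ≤ φ t)
    (μ : Measure (EuclideanSpace ℝ (Fin n)))
    (hμ : μ = volume.withDensity fun x => ENNReal.ofReal (Real.exp (-φ (gauge L x))))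
    (R : ℝ) (hR : 0 < R)
    (hvol : volume K ≤ volume (R • L)) :
    μ K ≤ μ (R • L) :=
  stmt16_general n K L hKcomp hLcomp hLconv hLint hLsymm φ hmono μ hμ R hR hvol
end
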